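/- arXiv:2303.09900 — 2 statements merged into one kernel-verified Lean document; each statement's English description precedes it below -/
import Mathlib

section
/- Bruhat decomposition over the big cell: assume J_r Y^T − Y J_r^T + (−1)^r X J'_{2m} X^T = 0, Y is invertible, and S(X,Y) is invertible. Then ẇ_0 ∈ Sp_{2n}(F), S(X,Y)^{-1} ∈ Sp_{2m}(F), and ẇ_0^{-1} n(X,Y) = diag(θ_r(Y), S(X,Y)^{-1}, Y) · n(X',Y') · n̄(X_1,Y_1), where X' = (−1)^{r−1} θ_r(Y^{-1}) Y^{-1} X, Y' = (−1)^r θ_r(Y)^{-1}, X_1 = (−1)^r Y^{-1} X, and Y_1 = (−1)^r Y^{-1}. Moreover the pairs (X',Y') and (X_1,Y_1) again satisfy the defining relation: J_r (Y')^T − Y' J_r^T + (−1)^r X' J'_{2m} (X')^T = 0 and J_r (Y_1)^T − Y_1 J_r^T + (−1)^r X_1 J'_{2m} (X_1)^T = 0. -/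
open Matrix

namespace RS

variable (F : Type*) [Field F]

/-- The matrix `J_k`: its `(i, k+1-i)` entry (1-indexed) is `(-1)^(i-1)`, i.e. in 0-indexed
terms the `(i,j)` entry is `(-1)^i` when `i + j = k - 1`, and all other entries are `0`. -/
def Jmat (k : ℕ) : Matrix (Fin k) (Fin k) F :=
  Matrix.of fun i j => if (i : ℕ) + (j : ℕ) = k - 1 then (-1 : F) ^ (i : ℕ) else 0

/-- A 2×2 block matrix with blocks of sizes `a, b` (rows) and `c, d` (columns), realized on
`Fin (a+b) × Fin (c+d)`. -/
def blk2 {a b c d : ℕ} (A : Matrix (Fin a) (Fin c) F) (B : Matrix (Fin a) (Fin d) F)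
    (C : Matrix (Fin b) (Fin c) F) (D : Matrix (Fin b) (Fin d) F) :
    Matrix (Fin (a + b)) (Fin (c + d)) F :=
  Matrix.of fun i j =>
    if hi : (i : ℕ) < a then
      if hj : (j : ℕ) < c then A ⟨(i : ℕ), hi⟩ ⟨(j : ℕ), hj⟩
      else B ⟨(i : ℕ), hi⟩ ⟨(j : ℕ) - c, by have := j.isLt; omega⟩
    else
      if hj : (j : ℕ) < c then C ⟨(i : ℕ) - a, by have := i.isLt; omega⟩ ⟨(j : ℕ), hj⟩
      else D ⟨(i : ℕ) - a, by have := i.isLt; omega⟩ ⟨(j : ℕ) - c, by have := j.isLt; omega⟩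

/-- A 3×3 block (square) matrix with blocks of sizes `a, b, c`, realized on `Fin (a+b+c)`. -/
def blk3 {a b c : ℕ}
    (A11 : Matrix (Fin a) (Fin a) F) (A12 : Matrix (Fin a) (Fin b) F)
    (A13 : Matrix (Fin a) (Fin c) F)
    (A21 : Matrix (Fin b) (Fin a) F) (A22 : Matrix (Fin b) (Fin b) F)
    (A23 : Matrix (Fin b) (Fin c) F)
    (A31 : Matrix (Fin c) (Fin a) F) (A32 : Matrix (Fin c) (Fin b) F)
    (A33 : Matrix (Fin c) (Fin c) F) :
    Matrix (Fin (a + b + c)) (Fin (a + b + c)) F :=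
  Matrix.of fun i j =>
    if hi1 : (i : ℕ) < a then
      if hj1 : (j : ℕ) < a then A11 ⟨(i : ℕ), hi1⟩ ⟨(j : ℕ), hj1⟩
      else if hj2 : (j : ℕ) < a + b then A12 ⟨(i : ℕ), hi1⟩ ⟨(j : ℕ) - a, by omega⟩
      else A13 ⟨(i : ℕ), hi1⟩ ⟨(j : ℕ) - (a + b), by have := j.isLt; omega⟩
    else if hi2 : (i : ℕ) < a + b then
      if hj1 : (j : ℕ) < a then A21 ⟨(i : ℕ) - a, by omega⟩ ⟨(j : ℕ), hj1⟩
      else if hj2 : (j : ℕ) < a + b then A22 ⟨(i : ℕ) - a, by omega⟩ ⟨(j : ℕ) - a, by omega⟩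
      else A23 ⟨(i : ℕ) - a, by omega⟩ ⟨(j : ℕ) - (a + b), by have := j.isLt; omega⟩
    else
      if hj1 : (j : ℕ) < a then A31 ⟨(i : ℕ) - (a + b), by have := i.isLt; omega⟩ ⟨(j : ℕ), hj1⟩
      else if hj2 : (j : ℕ) < a + b then
        A32 ⟨(i : ℕ) - (a + b), by have := i.isLt; omega⟩ ⟨(j : ℕ) - a, by omega⟩
      else A33 ⟨(i : ℕ) - (a + b), by have := i.isLt; omega⟩
        ⟨(j : ℕ) - (a + b), by have := j.isLt; omega⟩

/-- `J'_{2k}`, the `2k×2k` block matrix `[[0, J_k], [-J_kᵀ, 0]]`. -/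
def Jp (k : ℕ) : Matrix (Fin (k + k)) (Fin (k + k)) F :=
  blk2 F 0 (Jmat F k) (-(Jmat F k)ᵀ) 0

/-- `Sp_{2N}(F) = {h ∈ GL_{2N}(F) : hᵀ J'_{2N} h = J'_{2N}}`. -/
def Sp (N : ℕ) : Set (Matrix (Fin (N + N)) (Fin (N + N)) F) :=
  {h | IsUnit h ∧ hᵀ * Jp F N * h = Jp F N}

/-- `θ_r(g) = J_r (g⁻¹)ᵀ J_r⁻¹`. -/
noncomputable def theta (r : ℕ) (g : Matrix (Fin r) (Fin r) F) : Matrix (Fin r) (Fin r) F :=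
  Jmat F r * (g⁻¹)ᵀ * (Jmat F r)⁻¹

/-- `θ_{r,m}(X) = (-1)^r J'_{2m} Xᵀ J_r`. -/
def thetaRM (r m : ℕ) (X : Matrix (Fin r) (Fin (m + m)) F) : Matrix (Fin (m + m)) (Fin r) F :=
  (-1 : F) ^ r • (Jp F m * Xᵀ * Jmat F r)

/-- `n(X,Y) = [[I_r, X, Y], [0, I_{2m}, θ_{r,m}(X)], [0, 0, I_r]]` (block sizes `r, 2m, r`). -/
def nMat (r m : ℕ) (X : Matrix (Fin r) (Fin (m + m)) F) (Y : Matrix (Fin r) (Fin r) F) :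
    Matrix (Fin (r + (m + m) + r)) (Fin (r + (m + m) + r)) F :=
  blk3 F 1 X Y 0 1 (thetaRM F r m X) 0 0 1

/-- `n̄(X,Y) = [[I_r, 0, 0], [(-1)^r J'_{2m} Xᵀ J_r, I_{2m}, 0], [(-1)^r Y, (-1)^r X, I_r]]`. -/
def nbarMat (r m : ℕ) (X : Matrix (Fin r) (Fin (m + m)) F) (Y : Matrix (Fin r) (Fin r) F) :
    Matrix (Fin (r + (m + m) + r)) (Fin (r + (m + m) + r)) F :=
  blk3 F 1 0 0 ((-1 : F) ^ r • (Jp F m * Xᵀ * Jmat F r)) 1 0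
    ((-1 : F) ^ r • Y) ((-1 : F) ^ r • X) 1

/-- `ẇ_0 = [[0, 0, I_r], [0, I_{2m}, 0], [(-1)^r I_r, 0, 0]]`. -/
def w0 (r m : ℕ) : Matrix (Fin (r + (m + m) + r)) (Fin (r + (m + m) + r)) F :=
  blk3 F 0 0 1 0 1 0 ((-1 : F) ^ r • (1 : Matrix (Fin r) (Fin r) F)) 0 0

/-- `S(X,Y) = I_{2m} - J'_{2m} Xᵀ (Y⁻¹)ᵀ J_r X`. -/
noncomputable def Smat (r m : ℕ) (X : Matrix (Fin r) (Fin (m + m)) F) (Y : Matrix (Fin r) (Fin r) F) :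
    Matrix (Fin (m + m)) (Fin (m + m)) F :=
  1 - Jp F m * Xᵀ * (Y⁻¹)ᵀ * Jmat F r * X

/-- The block diagonal matrix `diag(m₁, m₂, θ_r(m₁))`. -/
noncomputable def levi (r m : ℕ) (m1 : Matrix (Fin r) (Fin r) F)
    (m2 : Matrix (Fin (m + m)) (Fin (m + m)) F) :
    Matrix (Fin (r + (m + m) + r)) (Fin (r + (m + m) + r)) F :=
  blk3 F m1 0 0 0 m2 0 0 0 (theta F r m1)

/-- `m(X,Y) = diag(θ_r(Y), S(X,Y)⁻¹, Y)`. -/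
noncomputable def mMat (r m : ℕ) (X : Matrix (Fin r) (Fin (m + m)) F) (Y : Matrix (Fin r) (Fin r) F) :
    Matrix (Fin (r + (m + m) + r)) (Fin (r + (m + m) + r)) F :=
  blk3 F (theta F r Y) 0 0 0 (Smat F r m X Y)⁻¹ 0 0 0 Y

/-- `α^∨(t) = diag(t·I_r, I_{2m}, t⁻¹·I_r)`. -/
def coroot (r m : ℕ) (t : Fˣ) :
    Matrix (Fin (r + (m + m) + r)) (Fin (r + (m + m) + r)) F :=
  blk3 F ((t : F) • (1 : Matrix (Fin r) (Fin r) F)) 0 0 0 1 0 0 0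
    (((t⁻¹ : Fˣ) : F) • (1 : Matrix (Fin r) (Fin r) F))

/-- Transport of a `2n×2n` matrix written with block sizes `(r, 2m, r)` to the canonical
index type `Fin ((r+m)+(r+m))` (where `n = r + m`), along the obvious cast. -/
def toSp (r m : ℕ) (M : Matrix (Fin (r + (m + m) + r)) (Fin (r + (m + m) + r)) F) :
    Matrix (Fin ((r + m) + (r + m))) (Fin ((r + m) + (r + m))) F :=
  Matrix.reindex (finCongr (by omega)) (finCongr (by omega)) M

/-- Upper-triangular unipotent matrices. -/
def UTU {k : ℕ} (u : Matrix (Fin k) (Fin k) F) : Prop :=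
  (∀ i, u i i = 1) ∧ ∀ i j : Fin k, (j : ℕ) < (i : ℕ) → u i j = 0

/-- A row vector as a `1 × k` matrix. -/
def rowVec {k : ℕ} (v : Fin k → F) : Matrix (Fin 1) (Fin k) F := Matrix.of fun _ j => v j

/-- A column vector as a `k × 1` matrix. -/
def colVec {k : ℕ} (v : Fin k → F) : Matrix (Fin k) (Fin 1) F := Matrix.of fun i _ => v i

/-- A scalar as a `1 × 1` matrix. -/
def scMat (x : F) : Matrix (Fin 1) (Fin 1) F := Matrix.of fun _ _ => x

/-- `Y_i`: the lower-left `i×i` corner submatrix of `Y` (rows `r-i+1,…,r`, columns `1,…,i`,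
1-indexed). -/
def llCorner (r : ℕ) (Y : Matrix (Fin r) (Fin r) F) (i : ℕ) (h : i ≤ r) :
    Matrix (Fin i) (Fin i) F :=
  Matrix.of fun a b =>
    Y ⟨r - i + (a : ℕ), by have := a.isLt; omega⟩ ⟨(b : ℕ), by have := b.isLt; omega⟩

/-- `Y^{(r-1)}`: the upper-right `(r-1)×(r-1)` corner submatrix of `Y` (rows `1,…,r-1`,
columns `2,…,r`, 1-indexed). -/
def urCorner (r : ℕ) (Y : Matrix (Fin r) (Fin r) F) :
    Matrix (Fin (r - 1)) (Fin (r - 1)) F :=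
  Matrix.of fun a b =>
    Y ⟨(a : ℕ), by have := a.isLt; omega⟩ ⟨(b : ℕ) + 1, by have := b.isLt; omega⟩

/-- `J₀`: the central `(2m-2)×(2m-2)` submatrix of `J'_{2m}` (rows and columns `2,…,2m-1`). -/
def J0 (m : ℕ) : Matrix (Fin (m + m - 2)) (Fin (m + m - 2)) F :=
  Matrix.of fun i j =>
    Jp F m ⟨(i : ℕ) + 1, by have := i.isLt; omega⟩ ⟨(j : ℕ) + 1, by have := j.isLt; omega⟩

/-- `diag(t₁,…,t_n, t_n⁻¹,…,t₁⁻¹)` (with `n = r + m`), realized on the index type with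
block sizes `(r, 2m, r)`. -/
def torus (r m : ℕ) (t : Fin (r + m) → Fˣ) :
    Matrix (Fin (r + (m + m) + r)) (Fin (r + (m + m) + r)) F :=
  Matrix.diagonal fun i =>
    if h : (i : ℕ) < r + m then ((t ⟨(i : ℕ), h⟩ : Fˣ) : F)
    else (((t ⟨r + (m + m) + r - 1 - (i : ℕ), by have := i.isLt; omega⟩)⁻¹ : Fˣ) : F)

/-- `Y_{i,j}`: the `(j-1)×(j-1)` submatrix of `Y` on the rows `{r-j+1,…,r} \ {r-i+1}` and the
columns `1,…,j-1` (all 1-indexed). -/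
def subDelRow (r : ℕ) (Y : Matrix (Fin r) (Fin r) F) (i j : ℕ)
    (hi : 1 ≤ i) (hij : i < j) (hj : j ≤ r) : Matrix (Fin (j - 1)) (Fin (j - 1)) F :=
  Matrix.of fun a b =>
    Y (if h : r - j + (a : ℕ) < r - i then
          (⟨r - j + (a : ℕ), by have := a.isLt; omega⟩ : Fin r)
        else (⟨r - j + (a : ℕ) + 1, by have := a.isLt; omega⟩ : Fin r))
      ⟨(b : ℕ), by have := b.isLt; omega⟩

/-- `Y'_{i,j}`: the `(r-i)×(r-i)` submatrix of `Y` on the rows `i+1,…,r` and the columns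
`{1,…,r-i+1} \ {r-j+1}` (all 1-indexed). -/
def subDelCol (r : ℕ) (Y : Matrix (Fin r) (Fin r) F) (i j : ℕ)
    (hi : 1 ≤ i) (hij : i < j) (hj : j ≤ r) : Matrix (Fin (r - i)) (Fin (r - i)) F :=
  Matrix.of fun a b =>
    Y ⟨i + (a : ℕ), by have := a.isLt; omega⟩
      (if h : (b : ℕ) < r - j then (⟨(b : ℕ), by have := b.isLt; omega⟩ : Fin r)
        else (⟨(b : ℕ) + 1, by have := b.isLt; omega⟩ : Fin r))


-- infrastructure

def fin3 (a b c : ℕ) : Fin (a + b + c) ≃ (Fin a ⊕ Fin b ⊕ Fin c) where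
  toFun i :=
    if h1 : (i : ℕ) < a then .inl ⟨i, h1⟩
    else if h2 : (i : ℕ) < a + b then .inr (.inl ⟨(i : ℕ) - a, by omega⟩)
    else .inr (.inr ⟨(i : ℕ) - (a + b), by have := i.isLt; omega⟩)
  invFun x :=
    match x with
    | .inl y => ⟨y, by have := y.isLt; omega⟩
    | .inr (.inl y) => ⟨a + y, by have := y.isLt; omega⟩
    | .inr (.inr y) => ⟨a + b + y, by have := y.isLt; omega⟩
  left_inv i := by
    by_cases h1 : (i : ℕ) < a
    · simp [h1]
    · by_cases h2 : (i : ℕ) < a + b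
      · simp only [h1, h2, dif_pos, dif_neg, not_false_iff]
        exact Fin.ext (by simp; omega)
      · simp only [h1, h2, dif_neg, not_false_iff]
        exact Fin.ext (by simp; omega)
  right_inv x := by
    rcases x with y | y | y
    · simp [y.isLt]
    · have : ¬ (a + (y : ℕ) < a) := by omega
      have h2 : a + (y : ℕ) < a + b := by have := y.isLt; omega
      simp [this, h2]
    · have h1 : ¬ (a + b + (y : ℕ) < a) := by omega
      have h2 : ¬ (a + b + (y : ℕ) < a + b) := by omega
      simp [h1, h2]

def blkS {a b c : ℕ}
    (A11 : Matrix (Fin a) (Fin a) F) (A12 : Matrix (Fin a) (Fin b) F)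
    (A13 : Matrix (Fin a) (Fin c) F)
    (A21 : Matrix (Fin b) (Fin a) F) (A22 : Matrix (Fin b) (Fin b) F)
    (A23 : Matrix (Fin b) (Fin c) F)
    (A31 : Matrix (Fin c) (Fin a) F) (A32 : Matrix (Fin c) (Fin b) F)
    (A33 : Matrix (Fin c) (Fin c) F) :
    Matrix (Fin a ⊕ Fin b ⊕ Fin c) (Fin a ⊕ Fin b ⊕ Fin c) F :=
  Matrix.of fun i j =>
    match i, j with
    | .inl i, .inl j => A11 i j
    | .inl i, .inr (.inl j) => A12 i j
    | .inl i, .inr (.inr j) => A13 i j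
    | .inr (.inl i), .inl j => A21 i j
    | .inr (.inl i), .inr (.inl j) => A22 i j
    | .inr (.inl i), .inr (.inr j) => A23 i j
    | .inr (.inr i), .inl j => A31 i j
    | .inr (.inr i), .inr (.inl j) => A32 i j
    | .inr (.inr i), .inr (.inr j) => A33 i j

lemma blk3_eq_submatrix {a b c : ℕ}
    (A11 : Matrix (Fin a) (Fin a) F) (A12 : Matrix (Fin a) (Fin b) F)
    (A13 : Matrix (Fin a) (Fin c) F)
    (A21 : Matrix (Fin b) (Fin a) F) (A22 : Matrix (Fin b) (Fin b) F)
    (A23 : Matrix (Fin b) (Fin c) F)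
    (A31 : Matrix (Fin c) (Fin a) F) (A32 : Matrix (Fin c) (Fin b) F)
    (A33 : Matrix (Fin c) (Fin c) F) :
    blk3 F A11 A12 A13 A21 A22 A23 A31 A32 A33 =
      (blkS F A11 A12 A13 A21 A22 A23 A31 A32 A33).submatrix (fin3 a b c) (fin3 a b c) := by
  ext i j
  simp only [blk3, blkS, fin3, Matrix.submatrix_apply, Equiv.coe_fn_mk, Matrix.of_apply]
  split_ifs <;> rfl

lemma blkS_mul {a b c : ℕ}
    (A11 : Matrix (Fin a) (Fin a) F) (A12 : Matrix (Fin a) (Fin b) F)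
    (A13 : Matrix (Fin a) (Fin c) F)
    (A21 : Matrix (Fin b) (Fin a) F) (A22 : Matrix (Fin b) (Fin b) F)
    (A23 : Matrix (Fin b) (Fin c) F)
    (A31 : Matrix (Fin c) (Fin a) F) (A32 : Matrix (Fin c) (Fin b) F)
    (A33 : Matrix (Fin c) (Fin c) F)
    (B11 : Matrix (Fin a) (Fin a) F) (B12 : Matrix (Fin a) (Fin b) F)
    (B13 : Matrix (Fin a) (Fin c) F)
    (B21 : Matrix (Fin b) (Fin a) F) (B22 : Matrix (Fin b) (Fin b) F)
    (B23 : Matrix (Fin b) (Fin c) F)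
    (B31 : Matrix (Fin c) (Fin a) F) (B32 : Matrix (Fin c) (Fin b) F)
    (B33 : Matrix (Fin c) (Fin c) F) :
    blkS F A11 A12 A13 A21 A22 A23 A31 A32 A33 * blkS F B11 B12 B13 B21 B22 B23 B31 B32 B33 =
      blkS F (A11*B11+A12*B21+A13*B31) (A11*B12+A12*B22+A13*B32) (A11*B13+A12*B23+A13*B33)
        (A21*B11+A22*B21+A23*B31) (A21*B12+A22*B22+A23*B32) (A21*B13+A22*B23+A23*B33)
        (A31*B11+A32*B21+A33*B31) (A31*B12+A32*B22+A33*B32) (A31*B13+A32*B23+A33*B33) := by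
  ext i j
  rcases i with i | i | i <;> rcases j with j | j | j <;>
    simp [blkS, Matrix.mul_apply, Fintype.sum_sum_type, Finset.sum_add_distrib, add_assoc]

lemma blk3_mul {a b c : ℕ}
    (A11 : Matrix (Fin a) (Fin a) F) (A12 : Matrix (Fin a) (Fin b) F)
    (A13 : Matrix (Fin a) (Fin c) F)
    (A21 : Matrix (Fin b) (Fin a) F) (A22 : Matrix (Fin b) (Fin b) F)
    (A23 : Matrix (Fin b) (Fin c) F)
    (A31 : Matrix (Fin c) (Fin a) F) (A32 : Matrix (Fin c) (Fin b) F)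
    (A33 : Matrix (Fin c) (Fin c) F)
    (B11 : Matrix (Fin a) (Fin a) F) (B12 : Matrix (Fin a) (Fin b) F)
    (B13 : Matrix (Fin a) (Fin c) F)
    (B21 : Matrix (Fin b) (Fin a) F) (B22 : Matrix (Fin b) (Fin b) F)
    (B23 : Matrix (Fin b) (Fin c) F)
    (B31 : Matrix (Fin c) (Fin a) F) (B32 : Matrix (Fin c) (Fin b) F)
    (B33 : Matrix (Fin c) (Fin c) F) :
    blk3 F A11 A12 A13 A21 A22 A23 A31 A32 A33 * blk3 F B11 B12 B13 B21 B22 B23 B31 B32 B33 =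
      blk3 F (A11*B11+A12*B21+A13*B31) (A11*B12+A12*B22+A13*B32) (A11*B13+A12*B23+A13*B33)
        (A21*B11+A22*B21+A23*B31) (A21*B12+A22*B22+A23*B32) (A21*B13+A22*B23+A23*B33)
        (A31*B11+A32*B21+A33*B31) (A31*B12+A32*B22+A33*B32) (A31*B13+A32*B23+A33*B33) := by
  simp only [blk3_eq_submatrix]
  rw [← Matrix.submatrix_mul _ _ _ _ _ (fin3 a b c).bijective, blkS_mul]

lemma blkS_one {a b c : ℕ} :
    blkS F (1 : Matrix (Fin a) (Fin a) F) 0 0 0 (1 : Matrix (Fin b) (Fin b) F) 0 0 0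
      (1 : Matrix (Fin c) (Fin c) F) = 1 := by
  ext i j
  rcases i with i | i | i <;> rcases j with j | j | j <;>
    simp [blkS, Matrix.one_apply, Sum.inl.injEq, Sum.inr.injEq]

lemma blk3_one {a b c : ℕ} :
    blk3 F (1 : Matrix (Fin a) (Fin a) F) 0 0 0 (1 : Matrix (Fin b) (Fin b) F) 0 0 0
      (1 : Matrix (Fin c) (Fin c) F) = 1 := by
  rw [blk3_eq_submatrix, blkS_one, Matrix.submatrix_one_equiv]

lemma blk3_transpose {a b c : ℕ}
    (A11 : Matrix (Fin a) (Fin a) F) (A12 : Matrix (Fin a) (Fin b) F)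
    (A13 : Matrix (Fin a) (Fin c) F)
    (A21 : Matrix (Fin b) (Fin a) F) (A22 : Matrix (Fin b) (Fin b) F)
    (A23 : Matrix (Fin b) (Fin c) F)
    (A31 : Matrix (Fin c) (Fin a) F) (A32 : Matrix (Fin c) (Fin b) F)
    (A33 : Matrix (Fin c) (Fin c) F) :
    (blk3 F A11 A12 A13 A21 A22 A23 A31 A32 A33)ᵀ =
      blk3 F A11ᵀ A21ᵀ A31ᵀ A12ᵀ A22ᵀ A32ᵀ A13ᵀ A23ᵀ A33ᵀ := by
  have h : (blkS F A11 A12 A13 A21 A22 A23 A31 A32 A33)ᵀ =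
      blkS F A11ᵀ A21ᵀ A31ᵀ A12ᵀ A22ᵀ A32ᵀ A13ᵀ A23ᵀ A33ᵀ := by
    ext i j
    rcases i with i | i | i <;> rcases j with j | j | j <;> rfl
  simp only [blk3_eq_submatrix, Matrix.transpose_submatrix, h]

lemma neg_one_pow_parity (i j : ℕ) (h : i % 2 = j % 2) : (-1 : F) ^ i = (-1 : F) ^ j := by
  rcases Nat.even_or_odd i with hi | hi
  · have hj : Even j := Nat.even_iff.mpr (by rw [← Nat.even_iff.mp hi]; omega)
    rw [hi.neg_one_pow, hj.neg_one_pow]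
  · have hj : Odd j := Nat.odd_iff.mpr (by rw [← Nat.odd_iff.mp hi]; omega)
    rw [hi.neg_one_pow, hj.neg_one_pow]

lemma antidiag_mul_transpose (k : ℕ)
    (M : Matrix (Fin k) (Fin k) F)
    (hM : ∀ i j : Fin k, M i j = if (i : ℕ) + (j : ℕ) = k - 1 then (-1 : F) ^ (i : ℕ) else 0) :
    M * Mᵀ = 1 := by
  ext i j
  have hk : 1 ≤ k := by have := i.isLt; omega
  rw [Matrix.mul_apply]
  rw [Finset.sum_eq_single (⟨k - 1 - (i : ℕ), by omega⟩ : Fin k)]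
  · simp only [Matrix.transpose_apply, hM]
    have h1 : (i : ℕ) + (k - 1 - (i : ℕ)) = k - 1 := by have := i.isLt; omega
    rw [if_pos h1]
    by_cases hij : i = j
    · subst hij
      rw [if_pos h1, Matrix.one_apply_eq, ← pow_add]
      exact Even.neg_one_pow ⟨i, rfl⟩
    · have : ¬ ((j : ℕ) + (k - 1 - (i : ℕ)) = k - 1) := by
        intro h
        exact hij (Fin.ext (by have := j.isLt; omega)).symm
      rw [if_neg this, Matrix.one_apply_ne hij]
      ring
  · intro l _ hl
    simp only [Matrix.transpose_apply, hM]
    have : ¬ ((i : ℕ) + (l : ℕ) = k - 1) := by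
      intro h
      exact hl (Fin.ext (by simp only []; have := l.isLt; have := i.isLt; omega))
    rw [if_neg this, zero_mul]
  · intro h
    exact absurd (Finset.mem_univ _) h

lemma Jmat_mul_transpose (k : ℕ) : Jmat F k * (Jmat F k)ᵀ = 1 :=
  antidiag_mul_transpose F k _ (fun i j => rfl)

lemma Jmat_transpose_mul (k : ℕ) : (Jmat F k)ᵀ * Jmat F k = 1 :=
  mul_eq_one_comm.mp (Jmat_mul_transpose F k)

lemma neg_one_pow_odd_sum {i j n : ℕ} (h : i + j = 2 * n - 1) (hn : 1 ≤ n) :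
    (-1 : F) ^ j = -(-1 : F) ^ i := by
  have : (-1 : F) ^ (i + j) = -1 := by
    rw [h]
    exact Odd.neg_one_pow ⟨n - 1, by omega⟩
  have h2 : (-1 : F) ^ i * (-1 : F) ^ j = -1 := by rw [← pow_add]; exact this
  have h3 : (-1 : F) ^ i * ((-1 : F) ^ i * (-1 : F) ^ j) = (-1:F)^i * (-1) := by rw [h2]
  rw [← mul_assoc, ← pow_add] at h3
  rw [Even.neg_one_pow ⟨i, rfl⟩, one_mul] at h3
  rw [h3]; ring

lemma Jp_apply (k : ℕ) (i j : Fin (k + k)) :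
    Jp F k i j = if (i : ℕ) + (j : ℕ) = k + k - 1 then (-1 : F) ^ (i : ℕ) else 0 := by
  have hik := i.isLt
  have hjk := j.isLt
  simp only [Jp, blk2, Jmat, Matrix.of_apply]
  by_cases h1 : (i : ℕ) < k
  · by_cases h2 : (j : ℕ) < k
    · rw [dif_pos h1, dif_pos h2]
      have : ¬ ((i : ℕ) + (j : ℕ) = k + k - 1) := by omega
      rw [if_neg this]; rfl
    · rw [dif_pos h1, dif_neg h2]
      by_cases h3 : (i : ℕ) + ((j : ℕ) - k) = k - 1
      · have h4 : (i : ℕ) + (j : ℕ) = k + k - 1 := by omega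
        rw [if_pos h3, if_pos h4]
      · have h4 : ¬ ((i : ℕ) + (j : ℕ) = k + k - 1) := by omega
        rw [if_neg h3, if_neg h4]
  · by_cases h2 : (j : ℕ) < k
    · rw [dif_neg h1, dif_pos h2]
      simp only [Matrix.neg_apply, Matrix.transpose_apply, Matrix.of_apply]
      by_cases h3 : (j : ℕ) + ((i : ℕ) - k) = k - 1
      · have h4 : (i : ℕ) + (j : ℕ) = k + k - 1 := by omega
        rw [if_pos h3, if_pos h4]
        rw [neg_one_pow_odd_sum F (show (i:ℕ) + (j:ℕ) = 2 * k - 1 by omega) (by omega)]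
        ring
      · have h4 : ¬ ((i : ℕ) + (j : ℕ) = k + k - 1) := by omega
        rw [if_neg h3, if_neg h4]; ring
    · rw [dif_neg h1, dif_neg h2]
      have : ¬ ((i : ℕ) + (j : ℕ) = k + k - 1) := by omega
      rw [if_neg this]; rfl

lemma Jp_mul_transpose (k : ℕ) : Jp F k * (Jp F k)ᵀ = 1 :=
  antidiag_mul_transpose F (k + k) _ (Jp_apply F k)

lemma Jp_transpose (k : ℕ) : (Jp F k)ᵀ = -Jp F k := by
  ext i j
  rw [Matrix.transpose_apply, Matrix.neg_apply, Jp_apply, Jp_apply]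
  by_cases h : (i : ℕ) + (j : ℕ) = k + k - 1
  · rw [if_pos (by omega : (j:ℕ) + (i:ℕ) = k + k - 1), if_pos h]
    have hk : 1 ≤ k := by have := i.isLt; omega
    exact neg_one_pow_odd_sum F (show (i:ℕ) + (j:ℕ) = 2 * k - 1 by omega) (by omega)
  · rw [if_neg (by omega : ¬ ((j:ℕ) + (i:ℕ) = k + k - 1)), if_neg h, neg_zero]

lemma Jmat_transpose (k : ℕ) (hk : 1 ≤ k) :
    (Jmat F k)ᵀ = (-1 : F) ^ (k - 1) • Jmat F k := by
  ext i j
  simp only [Matrix.transpose_apply, Jmat, Matrix.of_apply, Matrix.smul_apply, smul_eq_mul]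
  by_cases h : (i : ℕ) + (j : ℕ) = k - 1
  · rw [if_pos (by omega : (j:ℕ) + (i:ℕ) = k - 1), if_pos h, ← pow_add]
    exact neg_one_pow_parity F _ _ (by omega)
  · rw [if_neg (by omega : ¬ ((j:ℕ) + (i:ℕ) = k - 1)), if_neg h, mul_zero]

-- AUX START
lemma blk3_congr {a b c : ℕ}
    {A11 B11 : Matrix (Fin a) (Fin a) F} {A12 B12 : Matrix (Fin a) (Fin b) F}
    {A13 B13 : Matrix (Fin a) (Fin c) F}
    {A21 B21 : Matrix (Fin b) (Fin a) F} {A22 B22 : Matrix (Fin b) (Fin b) F}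
    {A23 B23 : Matrix (Fin b) (Fin c) F}
    {A31 B31 : Matrix (Fin c) (Fin a) F} {A32 B32 : Matrix (Fin c) (Fin b) F}
    {A33 B33 : Matrix (Fin c) (Fin c) F}
    (h11 : A11 = B11) (h12 : A12 = B12) (h13 : A13 = B13)
    (h21 : A21 = B21) (h22 : A22 = B22) (h23 : A23 = B23)
    (h31 : A31 = B31) (h32 : A32 = B32) (h33 : A33 = B33) :
    blk3 F A11 A12 A13 A21 A22 A23 A31 A32 A33 =
      blk3 F B11 B12 B13 B21 B22 B23 B31 B32 B33 := by
  subst h11 h12 h13 h21 h22 h23 h31 h32 h33; rfl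

lemma toSp_mul (r m : ℕ) (M N : Matrix (Fin (r + (m + m) + r)) (Fin (r + (m + m) + r)) F) :
    toSp F r m (M * N) = toSp F r m M * toSp F r m N := by
  simp [toSp, Matrix.reindex_apply, Matrix.submatrix_mul_equiv]

lemma toSp_transpose (r m : ℕ) (M : Matrix (Fin (r + (m + m) + r)) (Fin (r + (m + m) + r)) F) :
    toSp F r m Mᵀ = (toSp F r m M)ᵀ := by
  simp [toSp, Matrix.reindex_apply, Matrix.transpose_submatrix]

lemma toSp_one (r m : ℕ) : toSp F r m 1 = 1 := by
  simp [toSp]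

lemma Kblk_eq_Jp (r m : ℕ) :
    toSp F r m (blk3 F 0 0 (Jmat F r) 0 ((-1:F)^r • Jp F m) 0 ((-1:F)^r • Jmat F r) 0 0) =
      Jp F (r+m) := by
  ext i j
  rw [toSp, Matrix.reindex_apply, Matrix.submatrix_apply, Jp_apply]
  have hi := i.isLt
  have hj := j.isLt
  simp only [blk3, Jmat, Matrix.of_apply, Matrix.smul_apply, Matrix.zero_apply, smul_eq_mul,
    Jp_apply, finCongr_symm, finCongr_apply, Fin.coe_cast, mul_ite, mul_zero]
  split_ifs <;>
    first
      | rfl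
      | omega
      | (rw [← pow_add]; exact neg_one_pow_parity F _ _ (by omega))
-- AUX END
set_option maxHeartbeats 2000000 in
/-- Bruhat decomposition over the big cell. -/
theorem bruhat_decomposition (r m : ℕ) (hr : 1 ≤ r) (hm : 1 ≤ m)
    (X : Matrix (Fin r) (Fin (m + m)) F) (Y : Matrix (Fin r) (Fin r) F)
    (hrel : Jmat F r * Yᵀ - Y * (Jmat F r)ᵀ + (-1 : F) ^ r • (X * Jp F m * Xᵀ) = 0)
    (hY : IsUnit Y) (hS : IsUnit (Smat F r m X Y))
    (X' X1 : Matrix (Fin r) (Fin (m + m)) F) (Y' Y1 : Matrix (Fin r) (Fin r) F)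
    (hX' : X' = (-1 : F) ^ (r - 1) • (theta F r Y⁻¹ * (Y⁻¹ * X)))
    (hY' : Y' = (-1 : F) ^ r • (theta F r Y)⁻¹)
    (hX1 : X1 = (-1 : F) ^ r • (Y⁻¹ * X))
    (hY1 : Y1 = (-1 : F) ^ r • Y⁻¹) :
    toSp F r m (w0 F r m) ∈ Sp F (r + m) ∧
    (Smat F r m X Y)⁻¹ ∈ Sp F m ∧
    (w0 F r m)⁻¹ * nMat F r m X Y =
      mMat F r m X Y * nMat F r m X' Y' * nbarMat F r m X1 Y1 ∧
    Jmat F r * Y'ᵀ - Y' * (Jmat F r)ᵀ + (-1 : F) ^ r • (X' * Jp F m * X'ᵀ) = 0 ∧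
    Jmat F r * Y1ᵀ - Y1 * (Jmat F r)ᵀ + (-1 : F) ^ r • (X1 * Jp F m * X1ᵀ) = 0 := by
  subst hX' hY' hX1 hY1
  have hdetY : IsUnit Y.det := (Matrix.isUnit_iff_isUnit_det Y).mp hY
  have hdetS : IsUnit (Smat F r m X Y).det := (Matrix.isUnit_iff_isUnit_det _).mp hS
  set ε : F := (-1 : F)^r with hεdef
  have hε : ε * ε = 1 := by rw [hεdef, ← pow_add]; exact Even.neg_one_pow ⟨r, rfl⟩
  have hεr1 : (-1 : F)^(r-1) = -ε := by
    have h : ε = (-1:F)^(r-1) * (-1:F) := by rw [hεdef, ← pow_succ]; congr 1; omega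
    rw [h]; ring
  have hJJ : Jmat F r * (Jmat F r)ᵀ = 1 := Jmat_mul_transpose F r
  have hJtJ : (Jmat F r)ᵀ * Jmat F r = 1 := Jmat_transpose_mul F r
  have hJt : (Jmat F r)ᵀ = -(ε • Jmat F r) := by
    rw [Jmat_transpose F r hr, hεr1, neg_smul]
  have hJ2 : Jmat F r * Jmat F r = -(ε • 1) := by
    have h := hJJ
    rw [hJt, mul_neg, mul_smul_comm, neg_eq_iff_eq_neg] at h
    calc Jmat F r * Jmat F r = ε • (ε • (Jmat F r * Jmat F r)) := by
          rw [smul_smul, hε, one_smul]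
      _ = -(ε • 1) := by rw [h, smul_neg]
  have hPt : (Jp F m)ᵀ = -(Jp F m) := Jp_transpose F m
  have hPP : Jp F m * (Jp F m)ᵀ = 1 := Jp_mul_transpose F m
  have hP2 : Jp F m * Jp F m = -1 := by
    have h := hPP
    rw [hPt, mul_neg, neg_eq_iff_eq_neg] at h
    exact h
  have hYY : Y * Y⁻¹ = 1 := Matrix.mul_nonsing_inv Y hdetY
  have hYY' : Y⁻¹ * Y = 1 := Matrix.nonsing_inv_mul Y hdetY
  have hYYt : Yᵀ * (Y⁻¹)ᵀ = 1 := by rw [← Matrix.transpose_mul, hYY', Matrix.transpose_one]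
  have hYYt' : (Y⁻¹)ᵀ * Yᵀ = 1 := by rw [← Matrix.transpose_mul, hYY, Matrix.transpose_one]
  have hJinv : (Jmat F r)⁻¹ = (Jmat F r)ᵀ := Matrix.inv_eq_right_inv hJJ
  have hYii : (Y⁻¹)⁻¹ = Y := Matrix.nonsing_inv_nonsing_inv Y hdetY
  have hSS : Smat F r m X Y * (Smat F r m X Y)⁻¹ = 1 := Matrix.mul_nonsing_inv _ hdetS
  have hSS' : (Smat F r m X Y)⁻¹ * Smat F r m X Y = 1 := Matrix.nonsing_inv_mul _ hdetS
  have cJJ : ∀ {q : ℕ} (Z : Matrix (Fin r) (Fin q) F),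
      Jmat F r * (Jmat F r * Z) = -(ε • Z) := by
    intro q Z; rw [← Matrix.mul_assoc, hJ2, Matrix.neg_mul, Matrix.smul_mul, Matrix.one_mul]
  have cYY : ∀ {q : ℕ} (Z : Matrix (Fin r) (Fin q) F), Y * (Y⁻¹ * Z) = Z := by
    intro q Z; rw [← Matrix.mul_assoc, hYY, Matrix.one_mul]
  have cYY' : ∀ {q : ℕ} (Z : Matrix (Fin r) (Fin q) F), Y⁻¹ * (Y * Z) = Z := by
    intro q Z; rw [← Matrix.mul_assoc, hYY', Matrix.one_mul]
  have cYYt : ∀ {q : ℕ} (Z : Matrix (Fin r) (Fin q) F), Yᵀ * ((Y⁻¹)ᵀ * Z) = Z := by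
    intro q Z; rw [← Matrix.mul_assoc, hYYt, Matrix.one_mul]
  have cYYt' : ∀ {q : ℕ} (Z : Matrix (Fin r) (Fin q) F), (Y⁻¹)ᵀ * (Yᵀ * Z) = Z := by
    intro q Z; rw [← Matrix.mul_assoc, hYYt', Matrix.one_mul]
  have cPP : ∀ {q : ℕ} (Z : Matrix (Fin (m+m)) (Fin q) F),
      Jp F m * (Jp F m * Z) = -Z := by
    intro q Z; rw [← Matrix.mul_assoc, hP2, Matrix.neg_mul, Matrix.one_mul]
  have cSS : ∀ {q : ℕ} (Z : Matrix (Fin (m+m)) (Fin q) F),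
      Smat F r m X Y * ((Smat F r m X Y)⁻¹ * Z) = Z := by
    intro q Z; rw [← Matrix.mul_assoc, hSS, Matrix.one_mul]
  have cSS' : ∀ {q : ℕ} (Z : Matrix (Fin (m+m)) (Fin q) F),
      (Smat F r m X Y)⁻¹ * (Smat F r m X Y * Z) = Z := by
    intro q Z; rw [← Matrix.mul_assoc, hSS', Matrix.one_mul]
  have hXPXe : X * (Jp F m * Xᵀ) = -(Y * Jmat F r) - ε • (Jmat F r * Yᵀ) := by
    have h0 : ε • (X * Jp F m * Xᵀ) = -(Jmat F r * Yᵀ - Y * (Jmat F r)ᵀ) :=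
      eq_neg_of_add_eq_zero_right hrel
    have h1 : X * Jp F m * Xᵀ = ε • (Y * (Jmat F r)ᵀ) - ε • (Jmat F r * Yᵀ) := by
      calc X * Jp F m * Xᵀ = ε • (ε • (X * Jp F m * Xᵀ)) := by rw [smul_smul, hε, one_smul]
        _ = ε • (Y * (Jmat F r)ᵀ - Jmat F r * Yᵀ) := by rw [h0, neg_sub]
        _ = _ := by rw [smul_sub]
    rw [← Matrix.mul_assoc, h1, hJt]
    simp only [Matrix.mul_neg, Matrix.mul_smul, smul_neg, smul_smul, hε, one_smul]
  have cXPX : ∀ {q : ℕ} (Z : Matrix (Fin r) (Fin q) F),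
      X * (Jp F m * (Xᵀ * Z)) = -(Y * (Jmat F r * Z)) - ε • (Jmat F r * (Yᵀ * Z)) := by
    intro q Z
    calc X * (Jp F m * (Xᵀ * Z)) = (X * (Jp F m * Xᵀ)) * Z := by
          simp only [Matrix.mul_assoc]
      _ = _ := by
          rw [hXPXe]
          simp only [Matrix.sub_mul, Matrix.neg_mul, Matrix.smul_mul, Matrix.mul_assoc]
  have hthY : theta F r Y = Jmat F r * (Y⁻¹)ᵀ * (Jmat F r)ᵀ := by rw [theta, hJinv]
  have hthYi : theta F r Y⁻¹ = Jmat F r * Yᵀ * (Jmat F r)ᵀ := by rw [theta, hYii, hJinv]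
  have hthinv : (theta F r Y)⁻¹ = Jmat F r * Yᵀ * (Jmat F r)ᵀ := by
    refine Matrix.inv_eq_right_inv ?_
    rw [hthY]
    simp only [Matrix.transpose_sub, Matrix.transpose_add, Matrix.transpose_mul, Matrix.transpose_one, Matrix.transpose_transpose, Matrix.transpose_smul, Matrix.transpose_neg, Matrix.transpose_zero, hJt, hPt,
      Matrix.mul_assoc, mul_assoc, Matrix.smul_mul, smul_mul_assoc, Matrix.mul_smul, mul_smul_comm, Matrix.mul_add, mul_add, Matrix.add_mul, add_mul, Matrix.neg_mul, neg_mul, Matrix.mul_neg, mul_neg, Matrix.sub_mul, sub_mul, Matrix.mul_sub, mul_sub, Matrix.mul_one, mul_one, Matrix.one_mul, one_mul, Matrix.zero_mul, zero_mul, Matrix.mul_zero, mul_zero, smul_smul, hε, one_smul, smul_neg, neg_smul, neg_neg, smul_sub, smul_add, smul_zero, neg_zero, add_zero, zero_add, sub_zero, zero_sub,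
      cJJ, cYY, cYY', cYYt, cYYt', cPP, cXPX, hXPXe, hYY, hYY', hYYt, hYYt', hJ2, hP2]
  have hSPS : (Smat F r m X Y)ᵀ * Jp F m * Smat F r m X Y = Jp F m := by
    rw [Smat]
    simp only [Matrix.transpose_sub, Matrix.transpose_add, Matrix.transpose_mul, Matrix.transpose_one, Matrix.transpose_transpose, Matrix.transpose_smul, Matrix.transpose_neg, Matrix.transpose_zero, hJt, hPt,
      Matrix.mul_assoc, mul_assoc, Matrix.smul_mul, smul_mul_assoc, Matrix.mul_smul, mul_smul_comm, Matrix.mul_add, mul_add, Matrix.add_mul, add_mul, Matrix.neg_mul, neg_mul, Matrix.mul_neg, mul_neg, Matrix.sub_mul, sub_mul, Matrix.mul_sub, mul_sub, Matrix.mul_one, mul_one, Matrix.one_mul, one_mul, Matrix.zero_mul, zero_mul, Matrix.mul_zero, mul_zero, smul_smul, hε, one_smul, smul_neg, neg_smul, neg_neg, smul_sub, smul_add, smul_zero, neg_zero, add_zero, zero_add, sub_zero, zero_sub,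
      cJJ, cYY, cYY', cYYt, cYYt', cPP, cXPX, hXPXe, hYY, hYY', hYYt, hYYt', hJ2, hP2]
    try abel
  have hW : Jp F m * (Xᵀ * ((Y⁻¹)ᵀ * (Jmat F r * X))) = 1 - Smat F r m X Y := by
    rw [Smat, sub_sub_cancel]
    simp only [Matrix.mul_assoc]
  have hkey : Smat F r m X Y * (ε • (Jp F m * (Xᵀ * Jmat F r))) =
      -(Jp F m * (Xᵀ * ((Y⁻¹)ᵀ * (Jmat F r * Y)))) := by
    rw [Smat]
    simp only [Matrix.transpose_sub, Matrix.transpose_add, Matrix.transpose_mul, Matrix.transpose_one, Matrix.transpose_transpose, Matrix.transpose_smul, Matrix.transpose_neg, Matrix.transpose_zero, hJt, hPt,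
      Matrix.mul_assoc, mul_assoc, Matrix.smul_mul, smul_mul_assoc, Matrix.mul_smul, mul_smul_comm, Matrix.mul_add, mul_add, Matrix.add_mul, add_mul, Matrix.neg_mul, neg_mul, Matrix.mul_neg, mul_neg, Matrix.sub_mul, sub_mul, Matrix.mul_sub, mul_sub, Matrix.mul_one, mul_one, Matrix.one_mul, one_mul, Matrix.zero_mul, zero_mul, Matrix.mul_zero, mul_zero, smul_smul, hε, one_smul, smul_neg, neg_smul, neg_neg, smul_sub, smul_add, smul_zero, neg_zero, add_zero, zero_add, sub_zero, zero_sub,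
      cJJ, cYY, cYY', cYYt, cYYt', cPP, cXPX, hXPXe, hYY, hYY', hYYt, hYYt', hJ2, hP2]
    abel
  have h2 : ε • (Jp F m * (Xᵀ * Jmat F r)) =
      -((Smat F r m X Y)⁻¹ * (Jp F m * (Xᵀ * ((Y⁻¹)ᵀ * (Jmat F r * Y))))) := by
    calc ε • (Jp F m * (Xᵀ * Jmat F r))
        = (Smat F r m X Y)⁻¹ * (Smat F r m X Y * (ε • (Jp F m * (Xᵀ * Jmat F r)))) :=
          (cSS' _).symm
      _ = (Smat F r m X Y)⁻¹ * -(Jp F m * (Xᵀ * ((Y⁻¹)ᵀ * (Jmat F r * Y)))) := by rw [hkey]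
      _ = _ := by rw [Matrix.mul_neg]
  have hw0K : w0 F r m * blk3 F 0 0 (ε • 1) 0 1 0 1 0 0 = 1 := by
    rw [w0, blk3_mul, ← blk3_one F (a := r) (b := m+m) (c := r)]
    refine blk3_congr F ?_ ?_ ?_ ?_ ?_ ?_ ?_ ?_ ?_ <;>
      simp [smul_smul, hε, ← hεdef]
  have hw0inv : (w0 F r m)⁻¹ = blk3 F 0 0 (ε • 1) 0 1 0 1 0 0 :=
    Matrix.inv_eq_right_inv hw0K
  refine ⟨?_, ?_, ?_, ?_, ?_⟩
  · constructor
    · exact ⟨⟨toSp F r m (w0 F r m), toSp F r m (blk3 F 0 0 (ε • 1) 0 1 0 1 0 0),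
        by rw [← toSp_mul, hw0K, toSp_one],
        by rw [← toSp_mul, mul_eq_one_comm.mp hw0K, toSp_one]⟩, rfl⟩
    · have hKw : (w0 F r m)ᵀ *
          blk3 F 0 0 (Jmat F r) 0 (ε • Jp F m) 0 (ε • Jmat F r) 0 0 * w0 F r m =
          blk3 F 0 0 (Jmat F r) 0 (ε • Jp F m) 0 (ε • Jmat F r) 0 0 := by
        rw [w0, blk3_transpose, blk3_mul, blk3_mul]
        refine blk3_congr F ?_ ?_ ?_ ?_ ?_ ?_ ?_ ?_ ?_ <;>
          simp [smul_smul, hε, ← hεdef, Matrix.smul_mul, Matrix.mul_smul]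
      rw [← Kblk_eq_Jp F r m, ← hεdef, ← toSp_transpose, ← toSp_mul, ← toSp_mul, hKw]
  · constructor
    · exact ⟨⟨(Smat F r m X Y)⁻¹, Smat F r m X Y, hSS', hSS⟩, rfl⟩
    · have h1 : ((Smat F r m X Y)⁻¹)ᵀ * (Smat F r m X Y)ᵀ = 1 := by
        rw [← Matrix.transpose_mul, hSS, Matrix.transpose_one]
      calc ((Smat F r m X Y)⁻¹)ᵀ * Jp F m * (Smat F r m X Y)⁻¹
          = ((Smat F r m X Y)⁻¹)ᵀ * ((Smat F r m X Y)ᵀ * Jp F m * Smat F r m X Y) *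
            (Smat F r m X Y)⁻¹ := by rw [hSPS]
        _ = (((Smat F r m X Y)⁻¹)ᵀ * (Smat F r m X Y)ᵀ) * Jp F m *
            (Smat F r m X Y * (Smat F r m X Y)⁻¹) := by simp only [Matrix.mul_assoc]
        _ = Jp F m := by rw [h1, hSS, Matrix.one_mul, Matrix.mul_one]
  · rw [hw0inv, nMat, nMat, mMat, nbarMat, blk3_mul, blk3_mul, blk3_mul]
    refine blk3_congr F ?_ ?_ ?_ ?_ ?_ ?_ ?_ ?_ ?_
    · first
        | (simp only [hthinv, hεr1]
           simp only [← hεdef, thetaRM, hthY, hthYi, Matrix.transpose_sub, Matrix.transpose_add, Matrix.transpose_mul, Matrix.transpose_one, Matrix.transpose_transpose, Matrix.transpose_smul, Matrix.transpose_neg, Matrix.transpose_zero, hJt, hPt,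
      Matrix.mul_assoc, mul_assoc, Matrix.smul_mul, smul_mul_assoc, Matrix.mul_smul, mul_smul_comm, Matrix.mul_add, mul_add, Matrix.add_mul, add_mul, Matrix.neg_mul, neg_mul, Matrix.mul_neg, mul_neg, Matrix.sub_mul, sub_mul, Matrix.mul_sub, mul_sub, Matrix.mul_one, mul_one, Matrix.one_mul, one_mul, Matrix.zero_mul, zero_mul, Matrix.mul_zero, mul_zero, smul_smul, hε, one_smul, smul_neg, neg_smul, neg_neg, smul_sub, smul_add, smul_zero, neg_zero, add_zero, zero_add, sub_zero, zero_sub,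
      cJJ, cYY, cYY', cYYt, cYYt', cPP, cXPX, hXPXe, hYY, hYY', hYYt, hYYt', hJ2, hP2]
           try abel
           done)
        | (simp only [hthinv, hεr1]
           simp only [← hεdef, thetaRM, hthY, hthYi, Matrix.transpose_sub, Matrix.transpose_add, Matrix.transpose_mul, Matrix.transpose_one, Matrix.transpose_transpose, Matrix.transpose_smul, Matrix.transpose_neg, Matrix.transpose_zero, hJt, hPt,
      Matrix.mul_assoc, mul_assoc, Matrix.smul_mul, smul_mul_assoc, Matrix.mul_smul, mul_smul_comm, Matrix.mul_add, mul_add, Matrix.add_mul, add_mul, Matrix.neg_mul, neg_mul, Matrix.mul_neg, mul_neg, Matrix.sub_mul, sub_mul, Matrix.mul_sub, mul_sub, Matrix.mul_one, mul_one, Matrix.one_mul, one_mul, Matrix.zero_mul, zero_mul, Matrix.mul_zero, mul_zero, smul_smul, hε, one_smul, smul_neg, neg_smul, neg_neg, smul_sub, smul_add, smul_zero, neg_zero, add_zero, zero_add, sub_zero, zero_sub,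
      cJJ, cYY, cYY', cYYt, cYYt', cPP, cXPX, hXPXe, hYY, hYY', hYYt, hYYt', hJ2, hP2]
           first
             | (rw [hW, Matrix.mul_sub, Matrix.mul_one, hSS']; abel)
             | exact h2)
    · first
        | (simp only [hthinv, hεr1]
           simp only [← hεdef, thetaRM, hthY, hthYi, Matrix.transpose_sub, Matrix.transpose_add, Matrix.transpose_mul, Matrix.transpose_one, Matrix.transpose_transpose, Matrix.transpose_smul, Matrix.transpose_neg, Matrix.transpose_zero, hJt, hPt,
      Matrix.mul_assoc, mul_assoc, Matrix.smul_mul, smul_mul_assoc, Matrix.mul_smul, mul_smul_comm, Matrix.mul_add, mul_add, Matrix.add_mul, add_mul, Matrix.neg_mul, neg_mul, Matrix.mul_neg, mul_neg, Matrix.sub_mul, sub_mul, Matrix.mul_sub, mul_sub, Matrix.mul_one, mul_one, Matrix.one_mul, one_mul, Matrix.zero_mul, zero_mul, Matrix.mul_zero, mul_zero, smul_smul, hε, one_smul, smul_neg, neg_smul, neg_neg, smul_sub, smul_add, smul_zero, neg_zero, add_zero, zero_add, sub_zero, zero_sub,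
      cJJ, cYY, cYY', cYYt, cYYt', cPP, cXPX, hXPXe, hYY, hYY', hYYt, hYYt', hJ2, hP2]
           try abel
           done)
        | (simp only [hthinv, hεr1]
           simp only [← hεdef, thetaRM, hthY, hthYi, Matrix.transpose_sub, Matrix.transpose_add, Matrix.transpose_mul, Matrix.transpose_one, Matrix.transpose_transpose, Matrix.transpose_smul, Matrix.transpose_neg, Matrix.transpose_zero, hJt, hPt,
      Matrix.mul_assoc, mul_assoc, Matrix.smul_mul, smul_mul_assoc, Matrix.mul_smul, mul_smul_comm, Matrix.mul_add, mul_add, Matrix.add_mul, add_mul, Matrix.neg_mul, neg_mul, Matrix.mul_neg, mul_neg, Matrix.sub_mul, sub_mul, Matrix.mul_sub, mul_sub, Matrix.mul_one, mul_one, Matrix.one_mul, one_mul, Matrix.zero_mul, zero_mul, Matrix.mul_zero, mul_zero, smul_smul, hε, one_smul, smul_neg, neg_smul, neg_neg, smul_sub, smul_add, smul_zero, neg_zero, add_zero, zero_add, sub_zero, zero_sub,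
      cJJ, cYY, cYY', cYYt, cYYt', cPP, cXPX, hXPXe, hYY, hYY', hYYt, hYYt', hJ2, hP2]
           first
             | (rw [hW, Matrix.mul_sub, Matrix.mul_one, hSS']; abel)
             | exact h2)
    · first
        | (simp only [hthinv, hεr1]
           simp only [← hεdef, thetaRM, hthY, hthYi, Matrix.transpose_sub, Matrix.transpose_add, Matrix.transpose_mul, Matrix.transpose_one, Matrix.transpose_transpose, Matrix.transpose_smul, Matrix.transpose_neg, Matrix.transpose_zero, hJt, hPt,
      Matrix.mul_assoc, mul_assoc, Matrix.smul_mul, smul_mul_assoc, Matrix.mul_smul, mul_smul_comm, Matrix.mul_add, mul_add, Matrix.add_mul, add_mul, Matrix.neg_mul, neg_mul, Matrix.mul_neg, mul_neg, Matrix.sub_mul, sub_mul, Matrix.mul_sub, mul_sub, Matrix.mul_one, mul_one, Matrix.one_mul, one_mul, Matrix.zero_mul, zero_mul, Matrix.mul_zero, mul_zero, smul_smul, hε, one_smul, smul_neg, neg_smul, neg_neg, smul_sub, smul_add, smul_zero, neg_zero, add_zero, zero_add, sub_zero, zero_sub,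
      cJJ, cYY, cYY', cYYt, cYYt', cPP, cXPX, hXPXe, hYY, hYY', hYYt, hYYt', hJ2, hP2]
           try abel
           done)
        | (simp only [hthinv, hεr1]
           simp only [← hεdef, thetaRM, hthY, hthYi, Matrix.transpose_sub, Matrix.transpose_add, Matrix.transpose_mul, Matrix.transpose_one, Matrix.transpose_transpose, Matrix.transpose_smul, Matrix.transpose_neg, Matrix.transpose_zero, hJt, hPt,
      Matrix.mul_assoc, mul_assoc, Matrix.smul_mul, smul_mul_assoc, Matrix.mul_smul, mul_smul_comm, Matrix.mul_add, mul_add, Matrix.add_mul, add_mul, Matrix.neg_mul, neg_mul, Matrix.mul_neg, mul_neg, Matrix.sub_mul, sub_mul, Matrix.mul_sub, mul_sub, Matrix.mul_one, mul_one, Matrix.one_mul, one_mul, Matrix.zero_mul, zero_mul, Matrix.mul_zero, mul_zero, smul_smul, hε, one_smul, smul_neg, neg_smul, neg_neg, smul_sub, smul_add, smul_zero, neg_zero, add_zero, zero_add, sub_zero, zero_sub,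
      cJJ, cYY, cYY', cYYt, cYYt', cPP, cXPX, hXPXe, hYY, hYY', hYYt, hYYt', hJ2, hP2]
           first
             | (rw [hW, Matrix.mul_sub, Matrix.mul_one, hSS']; abel)
             | exact h2)
    · first
        | (simp only [hthinv, hεr1]
           simp only [← hεdef, thetaRM, hthY, hthYi, Matrix.transpose_sub, Matrix.transpose_add, Matrix.transpose_mul, Matrix.transpose_one, Matrix.transpose_transpose, Matrix.transpose_smul, Matrix.transpose_neg, Matrix.transpose_zero, hJt, hPt,
      Matrix.mul_assoc, mul_assoc, Matrix.smul_mul, smul_mul_assoc, Matrix.mul_smul, mul_smul_comm, Matrix.mul_add, mul_add, Matrix.add_mul, add_mul, Matrix.neg_mul, neg_mul, Matrix.mul_neg, mul_neg, Matrix.sub_mul, sub_mul, Matrix.mul_sub, mul_sub, Matrix.mul_one, mul_one, Matrix.one_mul, one_mul, Matrix.zero_mul, zero_mul, Matrix.mul_zero, mul_zero, smul_smul, hε, one_smul, smul_neg, neg_smul, neg_neg, smul_sub, smul_add, smul_zero, neg_zero, add_zero, zero_add, sub_zero, zero_sub,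
      cJJ, cYY, cYY', cYYt, cYYt', cPP, cXPX, hXPXe, hYY, hYY', hYYt, hYYt', hJ2, hP2]
           try abel
           done)
        | (simp only [hthinv, hεr1]
           simp only [← hεdef, thetaRM, hthY, hthYi, Matrix.transpose_sub, Matrix.transpose_add, Matrix.transpose_mul, Matrix.transpose_one, Matrix.transpose_transpose, Matrix.transpose_smul, Matrix.transpose_neg, Matrix.transpose_zero, hJt, hPt,
      Matrix.mul_assoc, mul_assoc, Matrix.smul_mul, smul_mul_assoc, Matrix.mul_smul, mul_smul_comm, Matrix.mul_add, mul_add, Matrix.add_mul, add_mul, Matrix.neg_mul, neg_mul, Matrix.mul_neg, mul_neg, Matrix.sub_mul, sub_mul, Matrix.mul_sub, mul_sub, Matrix.mul_one, mul_one, Matrix.one_mul, one_mul, Matrix.zero_mul, zero_mul, Matrix.mul_zero, mul_zero, smul_smul, hε, one_smul, smul_neg, neg_smul, neg_neg, smul_sub, smul_add, smul_zero, neg_zero, add_zero, zero_add, sub_zero, zero_sub,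
      cJJ, cYY, cYY', cYYt, cYYt', cPP, cXPX, hXPXe, hYY, hYY', hYYt, hYYt', hJ2, hP2]
           first
             | (rw [hW, Matrix.mul_sub, Matrix.mul_one, hSS']; abel)
             | exact h2)
    · first
        | (simp only [hthinv, hεr1]
           simp only [← hεdef, thetaRM, hthY, hthYi, Matrix.transpose_sub, Matrix.transpose_add, Matrix.transpose_mul, Matrix.transpose_one, Matrix.transpose_transpose, Matrix.transpose_smul, Matrix.transpose_neg, Matrix.transpose_zero, hJt, hPt,
      Matrix.mul_assoc, mul_assoc, Matrix.smul_mul, smul_mul_assoc, Matrix.mul_smul, mul_smul_comm, Matrix.mul_add, mul_add, Matrix.add_mul, add_mul, Matrix.neg_mul, neg_mul, Matrix.mul_neg, mul_neg, Matrix.sub_mul, sub_mul, Matrix.mul_sub, mul_sub, Matrix.mul_one, mul_one, Matrix.one_mul, one_mul, Matrix.zero_mul, zero_mul, Matrix.mul_zero, mul_zero, smul_smul, hε, one_smul, smul_neg, neg_smul, neg_neg, smul_sub, smul_add, smul_zero, neg_zero, add_zero, zero_add, sub_zero, zero_sub,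
      cJJ, cYY, cYY', cYYt, cYYt', cPP, cXPX, hXPXe, hYY, hYY', hYYt, hYYt', hJ2, hP2]
           try abel
           done)
        | (simp only [hthinv, hεr1]
           simp only [← hεdef, thetaRM, hthY, hthYi, Matrix.transpose_sub, Matrix.transpose_add, Matrix.transpose_mul, Matrix.transpose_one, Matrix.transpose_transpose, Matrix.transpose_smul, Matrix.transpose_neg, Matrix.transpose_zero, hJt, hPt,
      Matrix.mul_assoc, mul_assoc, Matrix.smul_mul, smul_mul_assoc, Matrix.mul_smul, mul_smul_comm, Matrix.mul_add, mul_add, Matrix.add_mul, add_mul, Matrix.neg_mul, neg_mul, Matrix.mul_neg, mul_neg, Matrix.sub_mul, sub_mul, Matrix.mul_sub, mul_sub, Matrix.mul_one, mul_one, Matrix.one_mul, one_mul, Matrix.zero_mul, zero_mul, Matrix.mul_zero, mul_zero, smul_smul, hε, one_smul, smul_neg, neg_smul, neg_neg, smul_sub, smul_add, smul_zero, neg_zero, add_zero, zero_add, sub_zero, zero_sub,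
      cJJ, cYY, cYY', cYYt, cYYt', cPP, cXPX, hXPXe, hYY, hYY', hYYt, hYYt', hJ2, hP2]
           first
             | (rw [hW, Matrix.mul_sub, Matrix.mul_one, hSS']; abel)
             | exact h2)
    · first
        | (simp only [hthinv, hεr1]
           simp only [← hεdef, thetaRM, hthY, hthYi, Matrix.transpose_sub, Matrix.transpose_add, Matrix.transpose_mul, Matrix.transpose_one, Matrix.transpose_transpose, Matrix.transpose_smul, Matrix.transpose_neg, Matrix.transpose_zero, hJt, hPt,
      Matrix.mul_assoc, mul_assoc, Matrix.smul_mul, smul_mul_assoc, Matrix.mul_smul, mul_smul_comm, Matrix.mul_add, mul_add, Matrix.add_mul, add_mul, Matrix.neg_mul, neg_mul, Matrix.mul_neg, mul_neg, Matrix.sub_mul, sub_mul, Matrix.mul_sub, mul_sub, Matrix.mul_one, mul_one, Matrix.one_mul, one_mul, Matrix.zero_mul, zero_mul, Matrix.mul_zero, mul_zero, smul_smul, hε, one_smul, smul_neg, neg_smul, neg_neg, smul_sub, smul_add, smul_zero, neg_zero, add_zero, zero_add, sub_zero, zero_sub,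
      cJJ, cYY, cYY', cYYt, cYYt', cPP, cXPX, hXPXe, hYY, hYY', hYYt, hYYt', hJ2, hP2]
           try abel
           done)
        | (simp only [hthinv, hεr1]
           simp only [← hεdef, thetaRM, hthY, hthYi, Matrix.transpose_sub, Matrix.transpose_add, Matrix.transpose_mul, Matrix.transpose_one, Matrix.transpose_transpose, Matrix.transpose_smul, Matrix.transpose_neg, Matrix.transpose_zero, hJt, hPt,
      Matrix.mul_assoc, mul_assoc, Matrix.smul_mul, smul_mul_assoc, Matrix.mul_smul, mul_smul_comm, Matrix.mul_add, mul_add, Matrix.add_mul, add_mul, Matrix.neg_mul, neg_mul, Matrix.mul_neg, mul_neg, Matrix.sub_mul, sub_mul, Matrix.mul_sub, mul_sub, Matrix.mul_one, mul_one, Matrix.one_mul, one_mul, Matrix.zero_mul, zero_mul, Matrix.mul_zero, mul_zero, smul_smul, hε, one_smul, smul_neg, neg_smul, neg_neg, smul_sub, smul_add, smul_zero, neg_zero, add_zero, zero_add, sub_zero, zero_sub,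
      cJJ, cYY, cYY', cYYt, cYYt', cPP, cXPX, hXPXe, hYY, hYY', hYYt, hYYt', hJ2, hP2]
           first
             | (rw [hW, Matrix.mul_sub, Matrix.mul_one, hSS']; abel)
             | exact h2)
    · first
        | (simp only [hthinv, hεr1]
           simp only [← hεdef, thetaRM, hthY, hthYi, Matrix.transpose_sub, Matrix.transpose_add, Matrix.transpose_mul, Matrix.transpose_one, Matrix.transpose_transpose, Matrix.transpose_smul, Matrix.transpose_neg, Matrix.transpose_zero, hJt, hPt,
      Matrix.mul_assoc, mul_assoc, Matrix.smul_mul, smul_mul_assoc, Matrix.mul_smul, mul_smul_comm, Matrix.mul_add, mul_add, Matrix.add_mul, add_mul, Matrix.neg_mul, neg_mul, Matrix.mul_neg, mul_neg, Matrix.sub_mul, sub_mul, Matrix.mul_sub, mul_sub, Matrix.mul_one, mul_one, Matrix.one_mul, one_mul, Matrix.zero_mul, zero_mul, Matrix.mul_zero, mul_zero, smul_smul, hε, one_smul, smul_neg, neg_smul, neg_neg, smul_sub, smul_add, smul_zero, neg_zero, add_zero, zero_add, sub_zero, zero_sub,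
      cJJ, cYY, cYY', cYYt, cYYt', cPP, cXPX, hXPXe, hYY, hYY', hYYt, hYYt', hJ2, hP2]
           try abel
           done)
        | (simp only [hthinv, hεr1]
           simp only [← hεdef, thetaRM, hthY, hthYi, Matrix.transpose_sub, Matrix.transpose_add, Matrix.transpose_mul, Matrix.transpose_one, Matrix.transpose_transpose, Matrix.transpose_smul, Matrix.transpose_neg, Matrix.transpose_zero, hJt, hPt,
      Matrix.mul_assoc, mul_assoc, Matrix.smul_mul, smul_mul_assoc, Matrix.mul_smul, mul_smul_comm, Matrix.mul_add, mul_add, Matrix.add_mul, add_mul, Matrix.neg_mul, neg_mul, Matrix.mul_neg, mul_neg, Matrix.sub_mul, sub_mul, Matrix.mul_sub, mul_sub, Matrix.mul_one, mul_one, Matrix.one_mul, one_mul, Matrix.zero_mul, zero_mul, Matrix.mul_zero, mul_zero, smul_smul, hε, one_smul, smul_neg, neg_smul, neg_neg, smul_sub, smul_add, smul_zero, neg_zero, add_zero, zero_add, sub_zero, zero_sub,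
      cJJ, cYY, cYY', cYYt, cYYt', cPP, cXPX, hXPXe, hYY, hYY', hYYt, hYYt', hJ2, hP2]
           first
             | (rw [hW, Matrix.mul_sub, Matrix.mul_one, hSS']; abel)
             | exact h2)
    · first
        | (simp only [hthinv, hεr1]
           simp only [← hεdef, thetaRM, hthY, hthYi, Matrix.transpose_sub, Matrix.transpose_add, Matrix.transpose_mul, Matrix.transpose_one, Matrix.transpose_transpose, Matrix.transpose_smul, Matrix.transpose_neg, Matrix.transpose_zero, hJt, hPt,
      Matrix.mul_assoc, mul_assoc, Matrix.smul_mul, smul_mul_assoc, Matrix.mul_smul, mul_smul_comm, Matrix.mul_add, mul_add, Matrix.add_mul, add_mul, Matrix.neg_mul, neg_mul, Matrix.mul_neg, mul_neg, Matrix.sub_mul, sub_mul, Matrix.mul_sub, mul_sub, Matrix.mul_one, mul_one, Matrix.one_mul, one_mul, Matrix.zero_mul, zero_mul, Matrix.mul_zero, mul_zero, smul_smul, hε, one_smul, smul_neg, neg_smul, neg_neg, smul_sub, smul_add, smul_zero, neg_zero, add_zero, zero_add, sub_zero, zero_sub,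
      cJJ, cYY, cYY', cYYt, cYYt', cPP, cXPX, hXPXe, hYY, hYY', hYYt, hYYt', hJ2, hP2]
           try abel
           done)
        | (simp only [hthinv, hεr1]
           simp only [← hεdef, thetaRM, hthY, hthYi, Matrix.transpose_sub, Matrix.transpose_add, Matrix.transpose_mul, Matrix.transpose_one, Matrix.transpose_transpose, Matrix.transpose_smul, Matrix.transpose_neg, Matrix.transpose_zero, hJt, hPt,
      Matrix.mul_assoc, mul_assoc, Matrix.smul_mul, smul_mul_assoc, Matrix.mul_smul, mul_smul_comm, Matrix.mul_add, mul_add, Matrix.add_mul, add_mul, Matrix.neg_mul, neg_mul, Matrix.mul_neg, mul_neg, Matrix.sub_mul, sub_mul, Matrix.mul_sub, mul_sub, Matrix.mul_one, mul_one, Matrix.one_mul, one_mul, Matrix.zero_mul, zero_mul, Matrix.mul_zero, mul_zero, smul_smul, hε, one_smul, smul_neg, neg_smul, neg_neg, smul_sub, smul_add, smul_zero, neg_zero, add_zero, zero_add, sub_zero, zero_sub,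
      cJJ, cYY, cYY', cYYt, cYYt', cPP, cXPX, hXPXe, hYY, hYY', hYYt, hYYt', hJ2, hP2]
           first
             | (rw [hW, Matrix.mul_sub, Matrix.mul_one, hSS']; abel)
             | exact h2)
    · simp only [hthYi, hthinv, hεr1, Matrix.transpose_sub, Matrix.transpose_add, Matrix.transpose_mul, Matrix.transpose_one, Matrix.transpose_transpose, Matrix.transpose_smul, Matrix.transpose_neg, Matrix.transpose_zero, hJt, hPt,
      Matrix.mul_assoc, mul_assoc, Matrix.smul_mul, smul_mul_assoc, Matrix.mul_smul, mul_smul_comm, Matrix.mul_add, mul_add, Matrix.add_mul, add_mul, Matrix.neg_mul, neg_mul, Matrix.mul_neg, mul_neg, Matrix.sub_mul, sub_mul, Matrix.mul_sub, mul_sub, Matrix.mul_one, mul_one, Matrix.one_mul, one_mul, Matrix.zero_mul, zero_mul, Matrix.mul_zero, mul_zero, smul_smul, hε, one_smul, smul_neg, neg_smul, neg_neg, smul_sub, smul_add, smul_zero, neg_zero, add_zero, zero_add, sub_zero, zero_sub,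
      cJJ, cYY, cYY', cYYt, cYYt', cPP, cXPX, hXPXe, hYY, hYY', hYYt, hYYt', hJ2, hP2]
    try abel
  · simp only [hthYi, hthinv, hεr1, Matrix.transpose_sub, Matrix.transpose_add, Matrix.transpose_mul, Matrix.transpose_one, Matrix.transpose_transpose, Matrix.transpose_smul, Matrix.transpose_neg, Matrix.transpose_zero, hJt, hPt,
      Matrix.mul_assoc, mul_assoc, Matrix.smul_mul, smul_mul_assoc, Matrix.mul_smul, mul_smul_comm, Matrix.mul_add, mul_add, Matrix.add_mul, add_mul, Matrix.neg_mul, neg_mul, Matrix.mul_neg, mul_neg, Matrix.sub_mul, sub_mul, Matrix.mul_sub, mul_sub, Matrix.mul_one, mul_one, Matrix.one_mul, one_mul, Matrix.zero_mul, zero_mul, Matrix.mul_zero, mul_zero, smul_smul, hε, one_smul, smul_neg, neg_smul, neg_neg, smul_sub, smul_add, smul_zero, neg_zero, add_zero, zero_add, sub_zero, zero_sub,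
      cJJ, cYY, cYY', cYYt, cYYt', cPP, cXPX, hXPXe, hYY, hYY', hYYt, hYYt', hJ2, hP2]
    try abel
  · simp only [hthYi, hthinv, hεr1, Matrix.transpose_sub, Matrix.transpose_add, Matrix.transpose_mul, Matrix.transpose_one, Matrix.transpose_transpose, Matrix.transpose_smul, Matrix.transpose_neg, Matrix.transpose_zero, hJt, hPt,
      Matrix.mul_assoc, mul_assoc, Matrix.smul_mul, smul_mul_assoc, Matrix.mul_smul, mul_smul_comm, Matrix.mul_add, mul_add, Matrix.add_mul, add_mul, Matrix.neg_mul, neg_mul, Matrix.mul_neg, mul_neg, Matrix.sub_mul, sub_mul, Matrix.mul_sub, mul_sub, Matrix.mul_one, mul_one, Matrix.one_mul, one_mul, Matrix.zero_mul, zero_mul, Matrix.mul_zero, mul_zero, smul_smul, hε, one_smul, smul_neg, neg_smul, neg_neg, smul_sub, smul_add, smul_zero, neg_zero, add_zero, zero_add, sub_zero, zero_sub,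
      cJJ, cYY, cYY', cYYt, cYYt', cPP, cXPX, hXPXe, hYY, hYY', hYYt, hYYt', hJ2, hP2]
    try abel

end RS
end

section
/- Explicit first unipotent factor of the Bruhat decomposition: let Y ∈ GL_r(F) with det(Y_i) ≠ 0 for all 1 ≤ i ≤ r, and write (uniquely) θ_r(Y) = u_1 J_r t_1 u_2 with u_1, u_2 upper-triangular unipotent and t_1 invertible diagonal. For 1 ≤ i < j ≤ r let Y_{i,j} denote the (j−1)×(j−1) submatrix of Y on the rows {r−j+1, r−j+2, …, r} \ {r−i+1} and the columns 1,…,j−1. Then (u_1)_{i,j} = det(Y_{i,j})/det(Y_{j−1}) for all 1 ≤ i < j ≤ r. -/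
open Matrix

namespace RS

variable (F : Type*) [Field F]

private lemma negpow_congr {m k : ℕ} (h : m % 2 = k % 2) :
    ((-1 : F)) ^ m = (-1 : F) ^ k := by
  conv_lhs => rw [← Nat.div_add_mod m 2]
  conv_rhs => rw [← Nat.div_add_mod k 2]
  simp [pow_add, pow_mul, h]

private lemma Jmat_sq (r : ℕ) :
    Jmat F r * Jmat F r = ((-1:F)^(r-1)) • (1 : Matrix (Fin r) (Fin r) F) := by
  ext a c
  have ha := a.isLt
  have hc := c.isLt
  rw [Matrix.mul_apply, Finset.sum_eq_single (⟨r-1-(a:ℕ), by omega⟩ : Fin r)]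
  · have hval : ((⟨r-1-(a:ℕ), by omega⟩ : Fin r) : ℕ) = r-1-(a:ℕ) := rfl
    simp only [Jmat, Matrix.of_apply, Matrix.smul_apply, Matrix.one_apply, hval]
    rcases eq_or_ne a c with h|h
    · subst h
      rw [if_pos (show (a:ℕ) + (r-1-(a:ℕ)) = r-1 by omega),
          if_pos (show (r-1-(a:ℕ)) + (a:ℕ) = r-1 by omega), if_pos rfl, smul_eq_mul, mul_one,
          ← pow_add]
      exact negpow_congr F (by omega)
    · rw [if_neg (show ¬((r-1-(a:ℕ)) + (c:ℕ) = r-1) from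
          fun hh => h (Fin.ext (show (a:ℕ) = (c:ℕ) by omega))), mul_zero, if_neg h, smul_zero]
  · intro b _ hb
    simp only [Jmat, Matrix.of_apply]
    have hno : ¬((a:ℕ) + (b:ℕ) = r-1) :=
      fun hh => hb (Fin.ext (show (b:ℕ) = r-1-(a:ℕ) by omega))
    rw [if_neg hno, zero_mul]
  · intro h
    exact absurd (Finset.mem_univ _) h

private lemma Jmat_mul_smul (r : ℕ) :
    Jmat F r * (((-1:F)^(r-1)) • Jmat F r) = 1 := by
  rw [Matrix.mul_smul, Jmat_sq, smul_smul, ← pow_add,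
    negpow_congr F (show ((r-1)+(r-1)) % 2 = 0 % 2 by omega), pow_zero, one_smul]

private lemma Jmat_inv (r : ℕ) : (Jmat F r)⁻¹ = ((-1:F)^(r-1)) • Jmat F r :=
  Matrix.inv_eq_right_inv (Jmat_mul_smul F r)

private lemma Jmat_det_isUnit (r : ℕ) : IsUnit (Jmat F r).det :=
  Matrix.isUnit_det_of_right_inverse (Jmat_mul_smul F r)
private lemma J_conj_entry (r : ℕ) (B : Matrix (Fin r) (Fin r) F)
    (hB : B.BlockTriangular id) (p q : Fin r) (hpq : (p:ℕ) < (q:ℕ)) :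
    (Jmat F r * B * Jmat F r) p q = 0 := by
  have hp := p.isLt
  have hq := q.isLt
  rw [Matrix.mul_apply]
  apply Finset.sum_eq_zero
  intro l _
  have hl := l.isLt
  by_cases hlq : (l:ℕ) + (q:ℕ) = r - 1
  · have h0 : (Jmat F r * B) p l = 0 := by
      rw [Matrix.mul_apply]
      apply Finset.sum_eq_zero
      intro k _
      have hk := k.isLt
      by_cases hpk : (p:ℕ) + (k:ℕ) = r - 1
      · have : B k l = 0 := hB (show l < k by rw [Fin.lt_def]; omega)
        rw [this, mul_zero]
      · simp only [Jmat, Matrix.of_apply]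
        rw [if_neg hpk, zero_mul]
    rw [h0, zero_mul]
  · have : Jmat F r l q = 0 := by
      simp only [Jmat, Matrix.of_apply]
      rw [if_neg hlq]
    rw [this, mul_zero]

private lemma key_system (r : ℕ) (hr : 1 ≤ r) (Y u1 u2 : Matrix (Fin r) (Fin r) F)
    (d : Fin r → F) (hu1 : UTU F u1) (hu2 : UTU F u2) (hd : ∀ i, d i ≠ 0)
    (hYdet : IsUnit Y.det)
    (hdec : theta F r Y = u1 * Jmat F r * Matrix.diagonal d * u2) :
    ∀ p q : Fin r, (p:ℕ) < (q:ℕ) →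
      ∑ b : Fin r, (-1:F)^(b:ℕ) * Y ⟨r-1-(b:ℕ), by omega⟩ p * u1 b q = 0 := by
  intro p q hpq
  -- u2 is upper triangular with determinant 1
  have hu2tri : u2.BlockTriangular id := by
    intro a b hab
    exact hu2.2 a b (by rw [Fin.lt_def] at hab; exact hab)
  have hu2det : u2.det = 1 := by
    rw [Matrix.det_of_upperTriangular hu2tri]
    exact Finset.prod_eq_one fun x _ => hu1.1 x ▸ hu2.1 x
  have hDdet : IsUnit (Matrix.diagonal d).det := by
    rw [Matrix.det_diagonal]
    exact isUnit_iff_ne_zero.mpr (Finset.prod_ne_zero_iff.mpr fun x _ => hd x)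
  set R := Jmat F r * (Matrix.diagonal d * u2) with hR
  have hRdet : IsUnit R.det := by
    rw [hR, Matrix.det_mul, Matrix.det_mul, hu2det, mul_one]
    exact (Jmat_det_isUnit F r).mul hDdet
  have hJJ : (Jmat F r)⁻¹ * Jmat F r = 1 := Matrix.nonsing_inv_mul _ (Jmat_det_isUnit F r)
  have hYY : Yᵀ * (Y⁻¹)ᵀ = 1 := by
    rw [← Matrix.transpose_mul, Matrix.nonsing_inv_mul _ hYdet, Matrix.transpose_one]
  -- The matrix L := Yᵀ * J⁻¹ * u1 satisfies L * R = J⁻¹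
  have hL : (Yᵀ * (Jmat F r)⁻¹ * u1) * R = (Jmat F r)⁻¹ := by
    have h1 : u1 * R = theta F r Y := by
      rw [hdec]; simp only [Matrix.mul_assoc, hR]
    calc (Yᵀ * (Jmat F r)⁻¹ * u1) * R
        = Yᵀ * ((Jmat F r)⁻¹ * (u1 * R)) := by simp only [Matrix.mul_assoc]
      _ = Yᵀ * ((Jmat F r)⁻¹ * (Jmat F r * ((Y⁻¹)ᵀ * (Jmat F r)⁻¹))) := by
          rw [h1, theta]; simp only [Matrix.mul_assoc]
      _ = Yᵀ * ((Y⁻¹)ᵀ * (Jmat F r)⁻¹) := by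
          rw [← Matrix.mul_assoc ((Jmat F r)⁻¹), hJJ, Matrix.one_mul]
      _ = (Jmat F r)⁻¹ := by rw [← Matrix.mul_assoc, hYY, Matrix.one_mul]
  have hLeq : Yᵀ * (Jmat F r)⁻¹ * u1 = (Jmat F r)⁻¹ * R⁻¹ := by
    have := Matrix.mul_nonsing_inv_cancel_right R (Yᵀ * (Jmat F r)⁻¹ * u1) hRdet
    rw [hL] at this
    exact this.symm
  -- R⁻¹ = u2⁻¹ * ((diagonal d)⁻¹ * J⁻¹)
  have hRinv : R⁻¹ = u2⁻¹ * (Matrix.diagonal d)⁻¹ * (Jmat F r)⁻¹ := by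
    rw [hR, Matrix.mul_inv_rev, Matrix.mul_inv_rev, Matrix.mul_assoc]
  -- B := u2⁻¹ * (diagonal d)⁻¹ is upper triangular
  haveI : Invertible u2 := u2.invertibleOfIsUnitDet (by rw [hu2det]; exact isUnit_one)
  have hBtri : (u2⁻¹ * (Matrix.diagonal d)⁻¹).BlockTriangular id := by
    apply Matrix.BlockTriangular.mul
    · exact Matrix.blockTriangular_inv_of_blockTriangular hu2tri
    · rw [Matrix.inv_diagonal]
      exact Matrix.blockTriangular_diagonal _
  -- hence the entry of L at (p,q) vanishes
  have hzero : (Yᵀ * (Jmat F r)⁻¹ * u1) p q = 0 := by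
    rw [hLeq, hRinv, ← Matrix.mul_assoc, Jmat_inv]
    have : ((-1:F)^(r-1)) • Jmat F r * (u2⁻¹ * (Matrix.diagonal d)⁻¹) *
        (((-1:F)^(r-1)) • Jmat F r)
        = (((-1:F)^(r-1)) * ((-1:F)^(r-1))) •
          (Jmat F r * (u2⁻¹ * (Matrix.diagonal d)⁻¹) * Jmat F r) := by
      rw [Matrix.smul_mul, Matrix.smul_mul, Matrix.mul_smul, smul_smul]
    rw [this, Matrix.smul_apply, J_conj_entry F r _ hBtri p q hpq, smul_zero]
  -- expand the entry
  have hzero2 : (Yᵀ * Jmat F r * u1) p q = 0 := by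
    rw [Jmat_inv] at hzero
    rw [Matrix.mul_smul, Matrix.smul_mul, Matrix.smul_apply, smul_eq_mul] at hzero
    rcases mul_eq_zero.mp hzero with h|h
    · exact absurd h (pow_ne_zero _ (by norm_num))
    · exact h
  rw [Matrix.mul_apply] at hzero2
  have hinner : ∀ b : Fin r, (Yᵀ * Jmat F r) p b =
      (-1:F)^(r-1-(b:ℕ)) * Y ⟨r-1-(b:ℕ), by omega⟩ p := by
    intro b
    have hb := b.isLt
    rw [Matrix.mul_apply, Finset.sum_eq_single (⟨r-1-(b:ℕ), by omega⟩ : Fin r)]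
    · have hval : ((⟨r-1-(b:ℕ), by omega⟩ : Fin r) : ℕ) = r-1-(b:ℕ) := rfl
      simp only [Jmat, Matrix.of_apply, Matrix.transpose_apply, hval]
      rw [if_pos (show r-1-(b:ℕ) + (b:ℕ) = r-1 by omega), mul_comm]
    · intro k _ hk
      simp only [Jmat, Matrix.of_apply, Matrix.transpose_apply]
      have : ¬((k:ℕ) + (b:ℕ) = r-1) :=
        fun hh => hk (Fin.ext (show (k:ℕ) = r-1-(b:ℕ) by have := k.isLt; omega))
      rw [if_neg this, mul_zero]
    · intro h
      exact absurd (Finset.mem_univ _) h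
  calc ∑ b : Fin r, (-1:F)^(b:ℕ) * Y ⟨r-1-(b:ℕ), by omega⟩ p * u1 b q
      = ∑ b : Fin r, ((-1:F)^(r-1)) * ((Yᵀ * Jmat F r) p b * u1 b q) := by
        apply Finset.sum_congr rfl
        intro b _
        have hb := b.isLt
        rw [hinner b, show (-1:F)^(b:ℕ) = (-1:F)^(r-1) * (-1:F)^(r-1-(b:ℕ)) by
          rw [← pow_add]; exact negpow_congr F (by omega)]
        ring
    _ = ((-1:F)^(r-1)) * ∑ b : Fin r, (Yᵀ * Jmat F r) p b * u1 b q := by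
        rw [Finset.mul_sum]
    _ = 0 := by rw [hzero2, mul_zero]
private def Yrow (r : ℕ) (hr : 1 ≤ r) (k : ℕ) : Fin r := ⟨r-1-k, by omega⟩

private def Nm (r n : ℕ) (hnr : n + 1 ≤ r) (Y : Matrix (Fin r) (Fin r) F) (a : ℕ) :
    Matrix (Fin n) (Fin n) F :=
  Matrix.of fun α β =>
    Y ⟨if (α:ℕ) < n - a then r-(n+1)+(α:ℕ) else r-(n+1)+(α:ℕ)+1, by have := α.isLt; split <;> omega⟩
      ⟨(β:ℕ), by have := β.isLt; omega⟩

private lemma sign_cast_ne_zero (n : ℕ) (σ : Equiv.Perm (Fin n)) :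
    ((Equiv.Perm.sign σ : ℤ) : F) ≠ 0 := by
  rcases Int.units_eq_one_or (Equiv.Perm.sign σ) with h|h <;> rw [h] <;> norm_num

private lemma dup_col (r n : ℕ) (hr : 1 ≤ r) (hnr : n + 1 ≤ r) (Y : Matrix (Fin r) (Fin r) F)
    (p : Fin r) (hp : (p:ℕ) < n) :
    ∑ k ∈ Finset.range (n+1), (-1:F)^k * Y (Yrow r hr k) p * (Nm F r n hnr Y k).det = 0 := by
  set A : Matrix (Fin (n+1)) (Fin (n+1)) F :=
    Matrix.of (fun a β => Y (Yrow r hr (a:ℕ))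
      (if hβ : (β:ℕ) < n then ⟨(β:ℕ), by omega⟩ else p)) with hA
  have hAdet : A.det = 0 := by
    have hne : (⟨(p:ℕ), by omega⟩ : Fin (n+1)) ≠ Fin.last n := by
      intro h
      have := congrArg Fin.val h
      simp only [Fin.val_last] at this
      omega
    apply Matrix.det_zero_of_column_eq hne
    intro k
    simp only [A, Matrix.of_apply]
    rw [dif_pos (show ((⟨(p:ℕ), by omega⟩ : Fin (n+1)) : ℕ) < n from hp),
      dif_neg (show ¬ ((Fin.last n : ℕ) < n) by simp)]
  have hco : ∀ (a : Fin (n+1)) (α : Fin n), ((a.succAbove α : ℕ)) =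
      if (α:ℕ) < (a:ℕ) then (α:ℕ) else (α:ℕ)+1 := by
    intro a α
    rcases lt_or_ge ((α:ℕ)) ((a:ℕ)) with h|h
    · rw [if_pos h, Fin.succAbove_of_castSucc_lt _ _ (by rw [Fin.lt_def]; simpa using h),
        Fin.coe_castSucc]
    · rw [if_neg (not_lt.mpr h), Fin.succAbove_of_le_castSucc _ _
        (by rw [Fin.le_def]; simpa using h), Fin.val_succ]
  have hsub : ∀ a : Fin (n+1),
      (A.submatrix a.succAbove Fin.castSucc).det =
      ((Equiv.Perm.sign (Fin.revPerm : Equiv.Perm (Fin n)) : ℤ) : F) *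
        (Nm F r n hnr Y (a:ℕ)).det := by
    intro a
    have ha := a.isLt
    have heq : A.submatrix a.succAbove Fin.castSucc =
        (Nm F r n hnr Y (a:ℕ)).submatrix Fin.revPerm id := by
      ext α β
      have hα := α.isLt
      have hβ := β.isLt
      simp only [Matrix.submatrix_apply, A, Matrix.of_apply, Nm, id_eq]
      rw [dif_pos (show ((Fin.castSucc β : ℕ)) < n from by simpa using hβ)]
      congr 1
      apply Fin.ext
      show r-1-((a.succAbove α : ℕ)) =
        (if ((Fin.revPerm α : Fin n) : ℕ) < n - (a:ℕ)
          then r-(n+1)+((Fin.revPerm α : Fin n) : ℕ) else r-(n+1)+((Fin.revPerm α : Fin n) : ℕ)+1)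
      rw [hco a α]
      simp only [Fin.revPerm_apply, Fin.val_rev]
      split_ifs <;> omega
    rw [heq, Matrix.det_permute]
  have hexp := Matrix.det_succ_column A (Fin.last n)
  rw [hAdet, Fin.succAbove_last] at hexp
  have hlastval : ((Fin.last n : Fin (n+1)) : ℕ) = n := rfl
  have hstep : ∀ a : Fin (n+1),
      (-1:F) ^ ((a:ℕ) + ((Fin.last n : Fin (n+1)) : ℕ)) * A a (Fin.last n) *
        (A.submatrix a.succAbove Fin.castSucc).det
      = ((-1:F)^n * ((Equiv.Perm.sign (Fin.revPerm : Equiv.Perm (Fin n)) : ℤ) : F)) *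
        ((-1:F)^((a:ℕ)) * Y (Yrow r hr (a:ℕ)) p * (Nm F r n hnr Y (a:ℕ)).det) := by
    intro a
    rw [hsub a, hlastval, pow_add]
    have hAlast : A a (Fin.last n) = Y (Yrow r hr (a:ℕ)) p := by
      simp only [A, Matrix.of_apply]
      rw [dif_neg (show ¬ ((Fin.last n : ℕ) < n) by simp)]
    rw [hAlast]
    ring
  rw [Finset.sum_congr rfl (fun a _ => hstep a), ← Finset.mul_sum] at hexp
  have hsum0 : ∑ a : Fin (n+1),
      (-1:F)^((a:ℕ)) * Y (Yrow r hr (a:ℕ)) p * (Nm F r n hnr Y (a:ℕ)).det = 0 := by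
    rcases mul_eq_zero.mp hexp.symm with h|h
    · exact absurd h (mul_ne_zero (pow_ne_zero _ (by norm_num)) (sign_cast_ne_zero F n _))
    · exact h
  rw [← hsum0]
  exact (Fin.sum_univ_eq_sum_range
    (fun k => (-1:F)^k * Y (Yrow r hr k) p * (Nm F r n hnr Y k).det) (n+1)).symm
/-- Explicit first unipotent factor of the Bruhat decomposition. -/
theorem bruhat_first_unipotent (r : ℕ) (hr : 1 ≤ r) (Y : Matrix (Fin r) (Fin r) F)
    (hY : ∀ (i : ℕ) (h1 : 1 ≤ i) (h2 : i ≤ r), (llCorner F r Y i h2).det ≠ 0)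
    (u1 u2 : Matrix (Fin r) (Fin r) F) (d : Fin r → F)
    (hu1 : UTU F u1) (hu2 : UTU F u2) (hd : ∀ i, d i ≠ 0)
    (hdec : theta F r Y = u1 * Jmat F r * Matrix.diagonal d * u2) :
    ∀ (i j : ℕ) (h1 : 1 ≤ i) (hij : i < j) (hj : j ≤ r),
      u1 ⟨i - 1, by omega⟩ ⟨j - 1, by omega⟩ =
        (subDelRow F r Y i j h1 hij hj).det /
          (llCorner F r Y (j - 1) (by omega)).det := by
  intro i j h1 hij hj
  obtain ⟨I, rfl⟩ : ∃ I, i = I + 1 := ⟨i - 1, by omega⟩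
  obtain ⟨n, rfl⟩ : ∃ n, j = n + 1 := ⟨j - 1, by omega⟩
  have hIn : I < n := by omega
  have hnr : n + 1 ≤ r := hj
  have hn1 : 1 ≤ n := by omega
  have hYdet : IsUnit Y.det := by
    have heq : llCorner F r Y r le_rfl = Y := by
      ext a b
      simp only [llCorner, Matrix.of_apply]
      have hrow : (⟨r - r + (a:ℕ), by have := a.isLt; omega⟩ : Fin r) = a :=
        Fin.ext (by have := a.isLt; simp)
      rw [hrow]
    have h := hY r hr le_rfl
    rw [heq] at h
    exact isUnit_iff_ne_zero.mpr h
  have hD : (llCorner F r Y n (by omega)).det ≠ 0 := hY n hn1 (by omega)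
  set Dn : F := (llCorner F r Y n (by omega)).det with hDn
  set NN : ℕ → F := fun a => (Nm F r n hnr Y a).det with hNN
  set U : ℕ → F := fun k => if h : k < r then u1 ⟨k, h⟩ ⟨n, by omega⟩ else 0 with hU
  -- the linear system satisfied by the column of u1
  have hC1 : ∀ p : Fin r, (p:ℕ) < n →
      ∑ k ∈ Finset.range (n+1), (-1:F)^k * Y (Yrow r hr k) p * U k = 0 := by
    intro p hp
    have hks := key_system F r hr Y u1 u2 d hu1 hu2 hd hYdet hdec p ⟨n, by omega⟩ (by exact hp)
    have e1 : ∑ k ∈ Finset.range r, (-1:F)^k * Y (Yrow r hr k) p * U k = 0 := by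
      rw [← Fin.sum_univ_eq_sum_range (fun k => (-1:F)^k * Y (Yrow r hr k) p * U k) r, ← hks]
      apply Finset.sum_congr rfl
      intro b _
      have hb := b.isLt
      have hUb : U (b:ℕ) = u1 b ⟨n, by omega⟩ := by
        simp only [hU]
        rw [dif_pos hb]
      rw [hUb]
      rfl
    have hzero : ∀ k ∈ Finset.range r, k ∉ Finset.range (n+1) →
        (-1:F)^k * Y (Yrow r hr k) p * U k = 0 := by
      intro k hk hk2
      simp only [Finset.mem_range] at hk hk2
      have hkn : n < k := by omega
      have hUk : U k = 0 := by
        simp only [hU]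
        rw [dif_pos hk]
        exact hu1.2 ⟨k, hk⟩ ⟨n, by omega⟩ (by exact hkn)
      rw [hUk, mul_zero]
    rw [Finset.sum_subset (Finset.range_subset_range.mpr hnr) hzero]
    exact e1
  -- the same linear system satisfied by the minors
  have hC2 : ∀ p : Fin r, (p:ℕ) < n →
      ∑ k ∈ Finset.range (n+1), (-1:F)^k * Y (Yrow r hr k) p * NN k = 0 := by
    intro p hp
    exact dup_col F r n hr hnr Y p hp
  have hUn : U n = 1 := by
    simp only [hU]
    rw [dif_pos (show n < r by omega)]
    exact hu1.1 ⟨n, by omega⟩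
  have hNNn : NN n = Dn := by
    simp only [hNN, hDn]
    congr 1
    ext α β
    have hα := α.isLt
    simp only [Nm, llCorner, Matrix.of_apply]
    congr 1
    apply Fin.ext
    show (if (α:ℕ) < n - n then r-(n+1)+(α:ℕ) else r-(n+1)+(α:ℕ)+1) = r - n + (α:ℕ)
    split_ifs with hh <;> omega
  -- the difference satisfies the homogeneous truncated system
  have hC3 : ∀ p : Fin r, (p:ℕ) < n →
      ∑ k ∈ Finset.range n, (-1:F)^k * Y (Yrow r hr k) p * (Dn * U k - NN k) = 0 := by
    intro p hp
    have hsplit : ∀ k ∈ Finset.range (n+1),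
        (-1:F)^k * Y (Yrow r hr k) p * (Dn * U k - NN k)
        = Dn * ((-1:F)^k * Y (Yrow r hr k) p * U k) -
          ((-1:F)^k * Y (Yrow r hr k) p * NN k) := by
      intro k _
      ring
    have h3 : ∑ k ∈ Finset.range (n+1),
        (-1:F)^k * Y (Yrow r hr k) p * (Dn * U k - NN k) = 0 := by
      rw [Finset.sum_congr rfl hsplit, Finset.sum_sub_distrib, ← Finset.mul_sum, hC1 p hp,
        hC2 p hp, mul_zero, sub_zero]
    rw [Finset.sum_range_succ, show Dn * U n - NN n = 0 from by rw [hUn, hNNn]; ring,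
      mul_zero, add_zero] at h3
    exact h3
  -- the coefficient matrix is invertible
  set K : Matrix (Fin n) (Fin n) F :=
    Matrix.of (fun b q => Y (Yrow r hr (b:ℕ)) ⟨(q:ℕ), by omega⟩) with hK
  have hKdet : IsUnit K.det := by
    have heq : K = (llCorner F r Y n (by omega)).submatrix Fin.revPerm id := by
      ext b q
      have hb := b.isLt
      simp only [hK, Matrix.of_apply, Matrix.submatrix_apply, llCorner, id_eq, Fin.revPerm_apply]
      congr 1
      apply Fin.ext
      show r-1-(b:ℕ) = r - n + ((Fin.rev b : Fin n) : ℕ)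
      rw [Fin.val_rev]
      omega
    rw [heq, Matrix.det_permute]
    exact isUnit_iff_ne_zero.mpr (mul_ne_zero (sign_cast_ne_zero F n _) hD)
  set w : Fin n → F := fun b => (-1:F)^(b:ℕ) * (Dn * U (b:ℕ) - NN (b:ℕ)) with hw
  have hwK : Matrix.vecMul w K = 0 := by
    funext q
    have h := hC3 ⟨(q:ℕ), by omega⟩ q.isLt
    have hvm : Matrix.vecMul w K q = ∑ b : Fin n, w b * K b q := rfl
    rw [hvm, Pi.zero_apply]
    calc ∑ b : Fin n, w b * K b q
        = ∑ b : Fin n, (-1:F)^(b:ℕ) * Y (Yrow r hr (b:ℕ)) ⟨(q:ℕ), by omega⟩ *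
            (Dn * U (b:ℕ) - NN (b:ℕ)) := by
          apply Finset.sum_congr rfl
          intro b _
          simp only [hw, hK, Matrix.of_apply]
          ring
      _ = ∑ k ∈ Finset.range n, (-1:F)^k * Y (Yrow r hr k) ⟨(q:ℕ), by omega⟩ *
            (Dn * U k - NN k) :=
          Fin.sum_univ_eq_sum_range
            (fun k => (-1:F)^k * Y (Yrow r hr k) (⟨(q:ℕ), by omega⟩ : Fin r) *
              (Dn * U k - NN k)) n
      _ = 0 := h
  have hw0 : w = 0 := by
    calc w = Matrix.vecMul w (1 : Matrix (Fin n) (Fin n) F) := (Matrix.vecMul_one w).symm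
      _ = Matrix.vecMul w (K * K⁻¹) := by rw [Matrix.mul_nonsing_inv K hKdet]
      _ = Matrix.vecMul (Matrix.vecMul w K) K⁻¹ := by rw [Matrix.vecMul_vecMul]
      _ = 0 := by rw [hwK, Matrix.zero_vecMul]
  have hI0 : (-1:F)^I * (Dn * U I - NN I) = 0 := congrFun hw0 ⟨I, hIn⟩
  have hdiff : Dn * U I - NN I = 0 := by
    rcases mul_eq_zero.mp hI0 with h|h
    · exact absurd h (pow_ne_zero _ (by norm_num))
    · exact h
  have hUI : U I = u1 ⟨I, show I < r by omega⟩ ⟨n, show n < r by omega⟩ := by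
    simp only [hU]
    rw [dif_pos (show I < r by omega)]
  have hNNI : NN I = (subDelRow F r Y (I+1) (n+1) h1 hij hj).det := by
    have hmat : Nm F r n hnr Y I = subDelRow F r Y (I+1) (n+1) h1 hij hj := by
      ext α β
      have hα := α.isLt
      simp only [Nm, subDelRow, Matrix.of_apply]
      by_cases hc : r-(n+1)+(α:ℕ) < r-(I+1)
      · rw [dif_pos hc]
        congr 1
        apply Fin.ext
        show (if (α:ℕ) < n - I then r-(n+1)+(α:ℕ) else r-(n+1)+(α:ℕ)+1) = r-(n+1)+(α:ℕ)
        split_ifs with hh <;> omega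
      · rw [dif_neg hc]
        congr 1
        apply Fin.ext
        show (if (α:ℕ) < n - I then r-(n+1)+(α:ℕ) else r-(n+1)+(α:ℕ)+1) = r-(n+1)+(α:ℕ)+1
        split_ifs with hh <;> omega
    simp only [hNN]
    rw [hmat]
  have hmain : u1 ⟨I, show I < r by omega⟩ ⟨n, show n < r by omega⟩ * Dn
      = (subDelRow F r Y (I+1) (n+1) h1 hij hj).det := by
    rw [← hUI, ← hNNI]
    linear_combination hdiff
  have hDgoal : (llCorner F r Y (n+1-1) (by omega)).det ≠ 0 := hD
  rw [eq_div_iff hDgoal]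
  exact hmain

end RS
end
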